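/- arXiv:1310.1174 — 7 statements merged into one kernel-verified Lean document; each statement's English description precedes it below -/
import Mathlib

section
/- Let C1 ⊆ F_2^n be a binary 1-perfect code and λ : C1 → F_2 any function. Then the Vasil'ev code C = {(u | u + v | p(u) + λ(v)) : u ∈ F_2^n, v ∈ C1} is a binary 1-perfect code of length 2n + 1, where p(u) denotes the sum of the coordinates of u. -/
/-! Two words of the Vasil'ev code with the same `v` lie at distance `2 d(u₁, u₂)` plus one
more when `p(u₁) ≠ p(u₂)`; since `p(u₁) - p(u₂) ≡ d(u₁, u₂) (mod 2)`, this is at least `3`.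
For `v₁ ≠ v₂` the first two blocks already give `d(u₁, u₂) + d(u₁ + v₁, u₂ + v₂) ≥ d(v₁, v₂) ≥ 3`
by the triangle inequality through `u₂ + v₁`. The code has `2ⁿ |C₁|` words, and
`2ⁿ |C₁| (2n + 2) = 2 · 2ⁿ · 2ⁿ` because `|C₁| (n + 1) = 2ⁿ`. -/

/-- `C` is a 1-perfect code over the alphabet `F` with coordinate set `ι`:
minimum distance at least 3 and `|C|·(1 + |ι|·(|F|−1)) = |F|^|ι|`. -/
def IsOnePerfectCode {ι F : Type*} [Fintype ι] [Fintype F] [DecidableEq F]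
    (C : Set (ι → F)) : Prop :=
  (∀ x ∈ C, ∀ y ∈ C, x ≠ y → 3 ≤ hammingDist x y) ∧
  Nat.card C * (1 + Fintype.card ι * (Fintype.card F - 1)) =
    Fintype.card F ^ Fintype.card ι

theorem Fin.append_inj {α : Type*} {m k : ℕ} {a c : Fin m → α} {b d : Fin k → α} :
    Fin.append a b = Fin.append c d ↔ a = c ∧ b = d := by
  refine ⟨fun h => ⟨funext fun i => ?_, funext fun i => ?_⟩, fun ⟨hac, hbd⟩ => hac ▸ hbd ▸ rfl⟩
  · simpa using congrFun h (Fin.castAdd k i)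
  · simpa using congrFun h (Fin.natAdd m i)

theorem hammingDist_append {β : Type*} [DecidableEq β] {m k : ℕ} (a c : Fin m → β)
    (b d : Fin k → β) :
    hammingDist (Fin.append a b) (Fin.append c d) = hammingDist a c + hammingDist b d := by
  simp only [hammingDist, Finset.card_filter, Fin.sum_univ_add, Fin.append_left,
    Fin.append_right]

theorem hammingDist_add_right_cancel {ι : Type*} [Fintype ι] {β : Type*} [Add β]
    [IsRightCancelAdd β] [DecidableEq β] (x y z : ι → β) :
    hammingDist (x + z) (y + z) = hammingDist x y :=
  hammingDist_comp (fun i b => b + z i) fun i => add_left_injective (z i)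

theorem hammingDist_add_left_cancel {ι : Type*} [Fintype ι] {β : Type*} [Add β]
    [IsLeftCancelAdd β] [DecidableEq β] (x y z : ι → β) :
    hammingDist (z + x) (z + y) = hammingDist x y :=
  hammingDist_comp (fun i b => z i + b) fun i => add_right_injective (z i)

theorem ZMod.two_sum_sub_sum_eq_hammingDist {ι : Type*} [Fintype ι] (x y : ι → ZMod 2) :
    (∑ i, x i) - ∑ i, y i = (hammingDist x y : ZMod 2) := by
  have indicator_eq_sub : ∀ a b : ZMod 2, a - b = ((if a ≠ b then 1 else 0 : ℕ) : ZMod 2) := by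
    decide
  rw [← Finset.sum_sub_distrib, hammingDist, Finset.card_filter, Nat.cast_sum]
  exact Finset.sum_congr rfl fun i _ => indicator_eq_sub (x i) (y i)

section Vasiliev

variable {n : ℕ}

def vasilievWord (lam : (Fin n → ZMod 2) → ZMod 2) (u v : Fin n → ZMod 2) :
    Fin (n + n + 1) → ZMod 2 :=
  Fin.append (Fin.append u (u + v)) (fun _ : Fin 1 => (∑ i, u i) + lam v)

def vasilievCode (C1 : Set (Fin n → ZMod 2)) (lam : (Fin n → ZMod 2) → ZMod 2) :
    Set (Fin (n + n + 1) → ZMod 2) :=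
  {w | ∃ u : Fin n → ZMod 2, ∃ v ∈ C1, w = vasilievWord lam u v}

variable (lam : (Fin n → ZMod 2) → ZMod 2)

theorem vasilievWord_injective :
    Function.Injective fun p : (Fin n → ZMod 2) × (Fin n → ZMod 2) =>
      vasilievWord lam p.1 p.2 := by
  rintro ⟨u₁, v₁⟩ ⟨u₂, v₂⟩ h
  obtain ⟨rfl, huv⟩ := Fin.append_inj.mp (Fin.append_inj.mp h).1
  exact Prod.ext rfl (add_right_injective u₁ huv)

theorem three_le_hammingDist_vasilievWord_of_left_ne {u₁ u₂ : Fin n → ZMod 2} (hu : u₁ ≠ u₂)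
    (v : Fin n → ZMod 2) : 3 ≤ hammingDist (vasilievWord lam u₁ v) (vasilievWord lam u₂ v) := by
  rw [vasilievWord, vasilievWord, hammingDist_append, hammingDist_append,
    hammingDist_add_right_cancel]
  have hpos : 0 < hammingDist u₁ u₂ := hammingDist_pos.mpr hu
  rcases Nat.lt_or_ge (hammingDist u₁ u₂) 2 with hlt | hge
  · have hone : hammingDist u₁ u₂ = 1 := by omega
    have hparity : (∑ i, u₁ i) + lam v ≠ (∑ i, u₂ i) + lam v := by
      rw [Ne, add_left_inj, ← sub_eq_zero, ZMod.two_sum_sub_sum_eq_hammingDist, hone]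
      decide
    have hlast : 0 < hammingDist (fun _ : Fin 1 => (∑ i, u₁ i) + lam v)
        (fun _ : Fin 1 => (∑ i, u₂ i) + lam v) :=
      hammingDist_pos.mpr fun h => hparity (congrFun h 0)
    omega
  · omega

theorem three_le_hammingDist_vasilievWord_of_three_le {v₁ v₂ : Fin n → ZMod 2}
    (hv : 3 ≤ hammingDist v₁ v₂) (u₁ u₂ : Fin n → ZMod 2) :
    3 ≤ hammingDist (vasilievWord lam u₁ v₁) (vasilievWord lam u₂ v₂) := by
  rw [vasilievWord, vasilievWord, hammingDist_append, hammingDist_append]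
  have htri := hammingDist_triangle (u₂ + v₁) (u₁ + v₁) (u₂ + v₂)
  rw [hammingDist_add_left_cancel, hammingDist_add_right_cancel, hammingDist_comm u₂] at htri
  omega

variable {C1 : Set (Fin n → ZMod 2)}

theorem three_le_hammingDist_vasilievCode
    (hC1 : ∀ x ∈ C1, ∀ y ∈ C1, x ≠ y → 3 ≤ hammingDist x y) :
    ∀ x ∈ vasilievCode C1 lam, ∀ y ∈ vasilievCode C1 lam, x ≠ y → 3 ≤ hammingDist x y := by
  rintro _ ⟨u₁, v₁, hv₁, rfl⟩ _ ⟨u₂, v₂, hv₂, rfl⟩ hne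
  by_cases hv : v₁ = v₂
  · subst hv
    exact three_le_hammingDist_vasilievWord_of_left_ne lam (fun hu => hne (by rw [hu])) v₁
  · exact three_le_hammingDist_vasilievWord_of_three_le lam (hC1 v₁ hv₁ v₂ hv₂ hv) u₁ u₂

variable (C1) in
theorem card_vasilievCode : Nat.card (vasilievCode C1 lam) = 2 ^ n * Nat.card C1 := by
  have himage : vasilievCode C1 lam =
      (fun p : (Fin n → ZMod 2) × (Fin n → ZMod 2) => vasilievWord lam p.1 p.2) ''
        (Set.univ ×ˢ C1) := by
    ext w
    constructor
    · rintro ⟨u, v, hv, rfl⟩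
      exact ⟨(u, v), ⟨Set.mem_univ u, hv⟩, rfl⟩
    · rintro ⟨⟨u, v⟩, ⟨-, hv⟩, rfl⟩
      exact ⟨u, v, hv, rfl⟩
  rw [himage, Nat.card_image_of_injective (vasilievWord_injective lam),
    Nat.card_congr (Equiv.Set.prod _ _), Nat.card_prod, Nat.card_univ]
  simp

end Vasiliev

/-- the Vasil'ev construction. If `C1 ⊆ F_2^n` is a binary 1-perfect
code and `λ : C1 → F_2` is any function, then
`C = {(u | u + v | p(u) + λ(v)) : u ∈ F_2^n, v ∈ C1}` is a binary 1-perfect code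
of length `2n + 1`, where `p(u)` is the sum of the coordinates of `u`. -/
theorem vasiliev_construction {n : ℕ} (C1 : Set (Fin n → ZMod 2))
    (hC1 : IsOnePerfectCode C1) (lam : (Fin n → ZMod 2) → ZMod 2) :
    IsOnePerfectCode
      {w : Fin (n + n + 1) → ZMod 2 |
        ∃ u : Fin n → ZMod 2, ∃ v ∈ C1,
          w = Fin.append (Fin.append u (u + v)) (fun _ : Fin 1 => (∑ i, u i) + lam v)} := by
  obtain ⟨hdist, hcard⟩ := hC1
  change IsOnePerfectCode (vasilievCode C1 lam)
  refine ⟨three_le_hammingDist_vasilievCode lam hdist, ?_⟩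
  simp only [card_vasilievCode, Fintype.card_fin, ZMod.card, Nat.add_one_sub_one, mul_one]
    at hcard ⊢
  calc 2 ^ n * Nat.card C1 * (1 + (n + n + 1))
      = 2 ^ n * 2 * (Nat.card C1 * (1 + n)) := by ring
    _ = 2 ^ (n + n + 1) := by rw [hcard, pow_add, pow_add, pow_one]; ring
end

section
/- Let C1 ⊆ F_q^n be a q-ary 1-perfect code and λ : C1 → F_q any function, and let α_1, ..., α_{q−1} be all nonzero elements of F_q. Then the code C = {(u_1 | u_2 | ... | u_{q−1} | v + Σ_i u_i | Σ_i α_i p(u_i) + λ(v)) : u_1,...,u_{q−1} ∈ F_q^n, v ∈ C1} is a q-ary 1-perfect code of length qn + 1 (Lindström–Schönheim construction). -/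
/-!
The difference of two codewords is the word built from `δ = u - u'`, `v - v'` and `λ(v) - λ(v')`.
If `v ≠ v'`, the middle block minus the column sums of `δ` is `v - v'`, so the first two blocks
already have weight at least `d(v, v') ≥ 3`. If `v = v'`, the word is
`(δ | Σ_k δ_k | Σ_k α_k p(δ_k))`, and a nonzero `δ` of weight at most two is caught by the
other blocks: a single entry shows up in its column sum and in the last coordinate; two entries
in different columns give two nonzero column sums; two entries `a, -a` in one column give the
last coordinate `(α_k - α_k') a ≠ 0`. The count is `q^((q-1)n) |C1|`, and
`1 + (qn + 1)(q - 1) = q (1 + n(q - 1))`.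
-/

open Finset

section Hamming

variable {ι β : Type*} [Fintype ι] [DecidableEq β]

theorem hammingDist_eq_hammingNorm_sub [AddCommGroup β] (x y : ι → β) :
    hammingDist x y = hammingNorm (x - y) := by
  rw [hammingDist_comm, hammingDist_eq_hammingNorm]
  exact congrArg hammingNorm (neg_add_eq_sub y x)

theorem hammingNorm_sub_le [AddCommGroup β] (x y : ι → β) :
    hammingNorm (x - y) ≤ hammingNorm x + hammingNorm y := by
  simpa [← hammingDist_eq_hammingNorm_sub, hammingDist_comm 0] using hammingDist_triangle x 0 y

theorem card_le_hammingNorm [Zero β] {x : ι → β} {s : Finset ι} (hs : ∀ i ∈ s, x i ≠ 0) :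
    #s ≤ hammingNorm x := by
  classical
  exact card_le_card fun i hi => mem_filter.mpr ⟨mem_univ i, hs i hi⟩

theorem eq_zero_of_hammingNorm_le_one [Zero β] {x : ι → β} (hx : hammingNorm x ≤ 1) {i j : ι}
    (hi : x i ≠ 0) (hji : j ≠ i) : x j = 0 := by
  classical
  by_contra hj
  have := card_le_hammingNorm (x := x) (s := {i, j}) (by simp [hi, hj])
  rw [card_pair hji.symm] at this
  omega

theorem eq_zero_of_hammingNorm_le_two [Zero β] {x : ι → β} (hx : hammingNorm x ≤ 2) {i i' j : ι}
    (hi : x i ≠ 0) (hi' : x i' ≠ 0) (hii' : i ≠ i') (hji : j ≠ i) (hji' : j ≠ i') : x j = 0 := by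
  classical
  by_contra hj
  have := card_le_hammingNorm (x := x) (s := {i, i', j}) (by simp [hi, hi', hj])
  rw [card_eq_three.mpr ⟨i, i', j, hii', hji.symm, hji'.symm, rfl⟩] at this
  omega

theorem hammingNorm_sumElim {κ : Type*} [Fintype κ] [Zero β] (f : ι → β) (g : κ → β) :
    hammingNorm (Sum.elim f g) = hammingNorm f + hammingNorm g := by
  simp only [hammingNorm, card_filter, Fintype.sum_sum_type, Sum.elim_inl, Sum.elim_inr]
  rfl

theorem hammingNorm_sum_le {κ : Type*} [Fintype κ] [AddCommMonoid β] (x : κ → ι → β) :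
    hammingNorm (fun i => ∑ k, x k i) ≤ hammingNorm (fun p : κ × ι => x p.1 p.2) := by
  classical
  calc hammingNorm (fun i => ∑ k, x k i)
      ≤ #((univ.filter fun p : κ × ι => x p.1 p.2 ≠ 0).image Prod.snd) := by
        refine card_le_card fun i hi => ?_
        obtain ⟨k, -, hk⟩ := exists_ne_zero_of_sum_ne_zero (mem_filter.mp hi).2
        exact mem_image.mpr ⟨(k, i), mem_filter.mpr ⟨mem_univ _, hk⟩, rfl⟩
    _ ≤ hammingNorm (fun p : κ × ι => x p.1 p.2) := card_image_le

end Hamming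

section LindstromSchonheim

variable {K ι F : Type*} [Fintype K] [Fintype ι] [Ring F]

def lindstromSchonheimWord (α : K → F) (u : K → ι → F) (v : ι → F) (c : F) :
    (K × ι) ⊕ (ι ⊕ Unit) → F :=
  Sum.elim (fun p => u p.1 p.2)
    (Sum.elim (fun j => v j + ∑ k, u k j) (fun _ => (∑ k, α k * ∑ j, u k j) + c))

def lindstromSchonheimCode (α : K → F) (lam : (ι → F) → F) (C : Set (ι → F)) :
    Set ((K × ι) ⊕ (ι ⊕ Unit) → F) :=
  {w | ∃ u : K → ι → F, ∃ v ∈ C, w = lindstromSchonheimWord α u v (lam v)}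

theorem lindstromSchonheimWord_sub (α : K → F) (u u' : K → ι → F) (v v' : ι → F) (c c' : F) :
    lindstromSchonheimWord α u v c - lindstromSchonheimWord α u' v' c' =
      lindstromSchonheimWord α (u - u') (v - v') (c - c') := by
  funext w
  rcases w with p | j | _ <;>
    simp only [lindstromSchonheimWord, Pi.sub_apply, Sum.elim_inl, Sum.elim_inr, sum_sub_distrib,
      mul_sub] <;> abel

theorem eq_and_eq_of_lindstromSchonheimWord_eq (α : K → F) {u u' : K → ι → F} {v v' : ι → F}
    {c c' : F} (h : lindstromSchonheimWord α u v c = lindstromSchonheimWord α u' v' c') :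
    u = u' ∧ v = v' := by
  have hu : u = u' := funext₂ fun k j => congrFun h (.inl (k, j))
  subst hu
  exact ⟨rfl, funext fun j => add_right_cancel (congrFun h (.inr (.inl j)))⟩

theorem hammingNorm_le_hammingNorm_lindstromSchonheimWord [DecidableEq F] (α : K → F)
    (u : K → ι → F) (v : ι → F) (c : F) :
    hammingNorm v ≤ hammingNorm (lindstromSchonheimWord α u v c) := by
  calc hammingNorm v = hammingNorm ((fun j => v j + ∑ k, u k j) - fun j => ∑ k, u k j) := by
        congr 1; funext j; simp
    _ ≤ hammingNorm (fun j => v j + ∑ k, u k j) + hammingNorm (fun j => ∑ k, u k j) :=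
        hammingNorm_sub_le _ _
    _ ≤ hammingNorm (fun j => v j + ∑ k, u k j) + hammingNorm (fun p : K × ι => u p.1 p.2) :=
        Nat.add_le_add_left (hammingNorm_sum_le u) _
    _ ≤ hammingNorm (lindstromSchonheimWord α u v c) := by
        rw [lindstromSchonheimWord, hammingNorm_sumElim, hammingNorm_sumElim]
        omega

theorem three_le_hammingNorm_lindstromSchonheimWord [DecidableEq F] [NoZeroDivisors F]
    {α : K → F} (hα : Function.Injective α) (hα0 : ∀ k, α k ≠ 0) {δ : K → ι → F} (hδ : δ ≠ 0) :
    3 ≤ hammingNorm (lindstromSchonheimWord α δ 0 0) := by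
  classical
  set D : K × ι → F := fun p => δ p.1 p.2
  set s : ι → F := fun j => ∑ k, δ k j
  set t : F := ∑ k, α k * ∑ j, δ k j
  have ht : t = ∑ p : K × ι, α p.1 * D p := by simp only [t, D, Fintype.sum_prod_type, mul_sum]
  have hnorm : hammingNorm (lindstromSchonheimWord α δ 0 0) =
      hammingNorm D + hammingNorm s + hammingNorm (fun _ : Unit => t) := by
    simp only [lindstromSchonheimWord, hammingNorm_sumElim, Pi.zero_apply, zero_add, add_zero,
      add_assoc]
    rfl
  obtain ⟨k, j, hkj⟩ : ∃ k j, δ k j ≠ 0 := by simpa [funext_iff] using hδ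
  rw [hnorm]
  by_contra! hlt
  by_cases hsj : s j = 0
  · obtain ⟨k', hk'k, hk'j⟩ : ∃ k', k' ≠ k ∧ δ k' j ≠ 0 := by
      by_contra! h
      exact hkj (Fintype.sum_eq_single k h ▸ hsj)
    have hD2 : 2 ≤ hammingNorm D := by
      have := card_le_hammingNorm (x := D) (s := {(k, j), (k', j)}) (by simp [D, hkj, hk'j])
      rwa [card_pair (by simp [hk'k.symm])] at this
    have hD : ∀ p, p ≠ (k, j) ∧ p ≠ (k', j) → D p = 0 := fun p hp =>
      eq_zero_of_hammingNorm_le_two (by omega) hkj hk'j (by simp [hk'k.symm]) hp.1 hp.2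
    have ht0 : t = 0 := congrFun ((hammingNorm_eq_zero (x := fun _ : Unit => t)).mp (by omega)) ()
    have hcol : δ k' j = -δ k j :=
      eq_neg_of_add_eq_zero_right (Fintype.sum_eq_add k k' hk'k.symm
        (fun k'' hk'' => hD (k'', j) (by simp [hk''.1, hk''.2])) ▸ hsj)
    rw [ht, Fintype.sum_eq_add (k, j) (k', j) (by simp [hk'k.symm]) fun p hp => by simp [hD p hp]]
      at ht0
    dsimp only [D] at ht0
    rw [hcol, mul_neg, ← sub_eq_add_neg, ← sub_mul] at ht0
    rcases mul_eq_zero.mp ht0 with h | h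
    · exact hk'k (hα (sub_eq_zero.mp h)).symm
    · exact hkj h
  · have hs1 : 0 < hammingNorm s := hammingNorm_pos_iff.mpr fun h => hsj (congrFun h j)
    have hD1 : 0 < hammingNorm D := hammingNorm_pos_iff.mpr fun h => hkj (congrFun h (k, j))
    have hD : ∀ p, p ≠ (k, j) → D p = 0 := fun p hp =>
      eq_zero_of_hammingNorm_le_one (by omega) hkj hp
    have ht0 : t = 0 := congrFun ((hammingNorm_eq_zero (x := fun _ : Unit => t)).mp (by omega)) ()
    rw [ht, Fintype.sum_eq_single (k, j) fun p hp => by simp [hD p hp]] at ht0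
    exact mul_ne_zero (hα0 k) hkj ht0

theorem lindstromSchonheimCode_three_le_hammingDist [DecidableEq F] [NoZeroDivisors F]
    {α : K → F} (hα : Function.Injective α) (hα0 : ∀ k, α k ≠ 0) (lam : (ι → F) → F)
    {C : Set (ι → F)} (hC : ∀ x ∈ C, ∀ y ∈ C, x ≠ y → 3 ≤ hammingDist x y) :
    ∀ x ∈ lindstromSchonheimCode α lam C, ∀ y ∈ lindstromSchonheimCode α lam C, x ≠ y →
      3 ≤ hammingDist x y := by
  rintro _ ⟨u, v, hv, rfl⟩ _ ⟨u', v', hv', rfl⟩ hne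
  rw [hammingDist_eq_hammingNorm_sub, lindstromSchonheimWord_sub]
  by_cases hvv : v = v'
  · subst hvv
    have hu : u - u' ≠ 0 := sub_ne_zero.mpr fun h => hne (h ▸ rfl)
    simpa only [sub_self] using three_le_hammingNorm_lindstromSchonheimWord hα hα0 hu
  · calc 3 ≤ hammingDist v v' := hC v hv v' hv' hvv
      _ = hammingNorm (v - v') := hammingDist_eq_hammingNorm_sub v v'
      _ ≤ _ := hammingNorm_le_hammingNorm_lindstromSchonheimWord _ _ _ _

theorem nat_card_lindstromSchonheimCode [Finite F] (α : K → F) (lam : (ι → F) → F)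
    (C : Set (ι → F)) :
    Nat.card (lindstromSchonheimCode α lam C) = Nat.card (K → ι → F) * Nat.card C := by
  have hrange : lindstromSchonheimCode α lam C =
      Set.range fun x : (K → ι → F) × C => lindstromSchonheimWord α x.1 x.2 (lam x.2) := by
    ext w
    simp [lindstromSchonheimCode, eq_comm]
  rw [hrange, Nat.card_range_of_injective, Nat.card_prod]
  rintro ⟨u, v, hv⟩ ⟨u', v', hv'⟩ h
  obtain ⟨rfl, rfl⟩ := eq_and_eq_of_lindstromSchonheimWord_eq α h
  rfl

theorem isOnePerfectCode_lindstromSchonheimCode [NoZeroDivisors F] [Fintype F] [DecidableEq F]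
    {α : K → F} (hα : Function.Injective α) (hα0 : ∀ k, α k ≠ 0)
    (hK : Fintype.card K = Fintype.card F - 1) (lam : (ι → F) → F)
    {C : Set (ι → F)} (hC : IsOnePerfectCode C) :
    IsOnePerfectCode (lindstromSchonheimCode α lam C) := by
  refine ⟨lindstromSchonheimCode_three_le_hammingDist hα hα0 lam hC.1, ?_⟩
  rw [nat_card_lindstromSchonheimCode]
  obtain ⟨m, hq⟩ : ∃ m, Fintype.card F = m + 1 :=
    Nat.exists_eq_succ_of_ne_zero Fintype.card_ne_zero
  have hCcard := hC.2
  simp only [Nat.card_fun, Nat.card_eq_fintype_card, Fintype.card_sum, Fintype.card_prod,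
    Fintype.card_unit, hK, hq, Nat.add_sub_cancel] at hCcard ⊢
  set N := Fintype.card ι
  calc ((m + 1) ^ N) ^ m * Nat.card C * (1 + (m * N + (N + 1)) * m)
      = ((m + 1) ^ N) ^ m * (m + 1) * (Nat.card C * (1 + N * m)) := by ring
    _ = (m + 1) ^ (m * N + (N + 1)) := by rw [hCcard]; ring

end LindstromSchonheim

/-- the Lindström–Schönheim construction. Given a `q`-ary 1-perfect
code `C1 ⊆ F_q^n`, any function `λ` on `C1` with values in `F_q`, and an
enumeration `α_1, …, α_{q−1}` of the nonzero elements of `F_q`, the code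
`{(u_1 | ⋯ | u_{q−1} | v + Σ_i u_i | Σ_i α_i p(u_i) + λ(v))}` is a
`q`-ary 1-perfect code of length `qn + 1`.  The `qn + 1` coordinates are
indexed by `(Fin (q−1) × Fin n) ⊕ Fin n ⊕ Unit`. -/
theorem lindstrom_schonheim_construction {F : Type*} [Field F] [Fintype F] [DecidableEq F]
    {n : ℕ} (C1 : Set (Fin n → F)) (hC1 : IsOnePerfectCode C1)
    (lam : (Fin n → F) → F)
    (α : Fin (Fintype.card F - 1) → F)
    (hα : Function.Injective α) (hα' : Set.range α = {x : F | x ≠ 0}) :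
    IsOnePerfectCode
      {w : (Fin (Fintype.card F - 1) × Fin n) ⊕ (Fin n ⊕ Unit) → F |
        ∃ u : Fin (Fintype.card F - 1) → Fin n → F, ∃ v ∈ C1,
          w = Sum.elim (fun p => u p.1 p.2)
            (Sum.elim (fun j => v j + ∑ k, u k j)
              (fun _ => (∑ k, α k * ∑ j, u k j) + lam v))} := by
  have hα0 : ∀ k, α k ≠ 0 := fun k => (hα' ▸ Set.mem_range_self k : α k ∈ {x : F | x ≠ 0})
  exact isOnePerfectCode_lindstromSchonheimCode hα hα0 (Fintype.card_fin _) lam hC1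
end

section
/- Let C1 be a q-ary 1-perfect code of length n, let R_i(1),...,R_i(t) be pairwise disjoint i-components of C1 (for a fixed coordinate i), and let σ_1,...,σ_t be permutations of F_q. Then C = (C1 \ ∪_s R_i(s)) ∪ (∪_s σ_s(R_i(s))) is a q-ary 1-perfect code of length n, where σ_s(R_i(s)) applies σ_s to the i-th coordinate of every codeword of R_i(s). -/
/-- Two codewords of `C` are adjacent (for coordinate `i`) iff their images
under deletion of coordinate `i` are at Hamming distance exactly 2. -/
def PunctAdj {n : ℕ} {F : Type*} [DecidableEq F] (C : Set (Fin n → F)) (i : Fin n)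
    (a b : Fin n → F) : Prop :=
  a ∈ C ∧ b ∈ C ∧
    hammingDist (fun j : {j : Fin n // j ≠ i} => a j) (fun j : {j : Fin n // j ≠ i} => b j) = 2

/-- `R` is an `i`-component of `C`: the punctured image of `R` is a connected
component of the minimum distance graph of the punctured code `C^i`, i.e. `R`
is the set of codewords reachable from some codeword by the adjacency relation. -/
def IsIComponent {n : ℕ} {F : Type*} [DecidableEq F] (C : Set (Fin n → F)) (i : Fin n)
    (R : Set (Fin n → F)) : Prop :=
  ∃ x ∈ C, R = {y ∈ C | Relation.ReflTransGen (PunctAdj C i) x y}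

/-- Apply the permutation `σ` of the alphabet to the `i`-th coordinate. -/
def applyAt {n : ℕ} {F : Type*} [DecidableEq (Fin n)] (i : Fin n) (σ : Equiv.Perm F)
    (x : Fin n → F) : Fin n → F :=
  Function.update x i (σ (x i))

/-!
The switched code is the image of `C1` under the map applying `σ s` at coordinate `i` on `R s`
and fixing the rest of `C1`, so it suffices that this map keeps distinct codewords at distance
at least 3: it is then injective, and the size of the code is preserved. On two codewords of the
same component it acts by one permutation of the `i`-th symbol, an isometry. Codewords not in a
common component differ in at least 3 coordinates other than `i` (at punctured distance at most
2 they would be at punctured distance exactly 2, hence adjacent), and the map touches none of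
these coordinates.
-/

section Puncturing

variable {n : ℕ} {F : Type*}

def puncture (i : Fin n) (x : Fin n → F) : {j : Fin n // j ≠ i} → F := fun j => x j

theorem puncture_applyAt (i : Fin n) (σ : Equiv.Perm F) (x : Fin n → F) :
    puncture i (applyAt i σ x) = puncture i x :=
  funext fun j => Function.update_of_ne j.2 _ _

variable [DecidableEq F]

theorem hammingDist_eq_hammingDist_puncture_add (i : Fin n) (x y : Fin n → F) :
    hammingDist x y = hammingDist (puncture i x) (puncture i y) + if x i ≠ y i then 1 else 0 := by
  rw [hammingDist, hammingDist, Finset.card_filter, Finset.card_filter,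
    Fintype.sum_eq_add_sum_subtype_ne _ i, add_comm]
  rfl

theorem hammingDist_puncture_le (i : Fin n) (x y : Fin n → F) :
    hammingDist (puncture i x) (puncture i y) ≤ hammingDist x y := by
  rw [hammingDist_eq_hammingDist_puncture_add i]
  omega

theorem hammingDist_le_hammingDist_puncture_add_one (i : Fin n) (x y : Fin n → F) :
    hammingDist x y ≤ hammingDist (puncture i x) (puncture i y) + 1 := by
  rw [hammingDist_eq_hammingDist_puncture_add i]
  split_ifs <;> omega

theorem hammingDist_applyAt (i : Fin n) (σ : Equiv.Perm F) (x y : Fin n → F) :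
    hammingDist (applyAt i σ x) (applyAt i σ y) = hammingDist x y := by
  have hcoord : ∀ z, applyAt i σ z = fun j => (if j = i then ⇑σ else id) (z j) := by
    intro z
    funext j
    by_cases hj : j = i
    · subst hj; simp [applyAt]
    · simp [applyAt, hj]
  rw [hcoord, hcoord, hammingDist_comp]
  intro j
  split_ifs
  exacts [σ.injective, Function.injective_id]

end Puncturing

theorem IsOnePerfectCode.image {ι F : Type*} [Fintype ι] [Fintype F] [DecidableEq F]
    {C : Set (ι → F)} (hC : IsOnePerfectCode C) {g : (ι → F) → ι → F}
    (hg : ∀ x ∈ C, ∀ y ∈ C, x ≠ y → 3 ≤ hammingDist (g x) (g y)) :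
    IsOnePerfectCode (g '' C) := by
  have hinj : Set.InjOn g C := fun x hx y hy hxy => by
    by_contra hne
    have := hg x hx y hy hne
    rw [hxy, hammingDist_self] at this
    omega
  refine ⟨?_, ?_⟩
  · rintro _ ⟨x, hx, rfl⟩ _ ⟨y, hy, rfl⟩ hne
    exact hg x hx y hy fun h => hne (congrArg g h)
  · rw [Nat.card_image_of_injOn hinj]
    exact hC.2

namespace IsIComponent

variable {n : ℕ} {F : Type*} [DecidableEq F] {C R : Set (Fin n → F)} {i : Fin n}

theorem subset (hR : IsIComponent C i R) : R ⊆ C := by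
  obtain ⟨x₀, -, rfl⟩ := hR
  exact fun _ hy => hy.1

theorem three_le_hammingDist_puncture
    (hC : ∀ x ∈ C, ∀ y ∈ C, x ≠ y → 3 ≤ hammingDist x y) (hR : IsIComponent C i R)
    {x y : Fin n → F} (hx : x ∈ R) (hy : y ∈ C) (hyR : y ∉ R) :
    3 ≤ hammingDist (puncture i x) (puncture i y) := by
  obtain ⟨x₀, -, rfl⟩ := hR
  obtain ⟨hxC, hreach⟩ := hx
  by_contra! hlt
  have hne : x ≠ y := by
    rintro rfl
    exact hyR ⟨hxC, hreach⟩
  have h3 := (hC x hxC y hy hne).trans (hammingDist_le_hammingDist_puncture_add_one i x y)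
  have hadj : PunctAdj C i x y := ⟨hxC, hy, (by omega : hammingDist (puncture i x) (puncture i y) = 2)⟩
  exact hyR ⟨hy, hreach.tail hadj⟩

end IsIComponent

section Switching

open Function

variable {n : ℕ} {F ι : Type*} (i : Fin n) (R : ι → Set (Fin n → F)) (σ : ι → Equiv.Perm F)

open scoped Classical in
noncomputable def switchComponents (x : Fin n → F) : Fin n → F :=
  if h : ∃ s, x ∈ R s then applyAt i (σ h.choose) x else x

variable {i R σ}

theorem switchComponents_of_mem (hdisj : Pairwise (Disjoint on R)) {s : ι} {x : Fin n → F}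
    (hx : x ∈ R s) : switchComponents i R σ x = applyAt i (σ s) x := by
  have hex : ∃ s, x ∈ R s := ⟨s, hx⟩
  have hs : hex.choose = s := by
    by_contra hne
    exact Set.disjoint_left.mp (hdisj hne) hex.choose_spec hx
  rw [switchComponents, dif_pos hex, hs]

theorem switchComponents_of_forall_notMem {x : Fin n → F} (hx : ∀ s, x ∉ R s) :
    switchComponents i R σ x = x := by
  rw [switchComponents, dif_neg (not_exists.mpr hx)]

theorem puncture_switchComponents (x : Fin n → F) :
    puncture i (switchComponents i R σ x) = puncture i x := by
  unfold switchComponents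
  split_ifs
  exacts [puncture_applyAt .., rfl]

theorem image_switchComponents (hdisj : Pairwise (Disjoint on R)) {C : Set (Fin n → F)}
    (hRC : ∀ s, R s ⊆ C) :
    switchComponents i R σ '' C = (C \ ⋃ s, R s) ∪ ⋃ s, applyAt i (σ s) '' R s := by
  ext z
  simp only [Set.mem_image, Set.mem_union, Set.mem_sdiff, Set.mem_iUnion]
  constructor
  · rintro ⟨x, hx, rfl⟩
    by_cases hxR : ∃ s, x ∈ R s
    · obtain ⟨s, hxs⟩ := hxR
      exact .inr ⟨s, x, hxs, (switchComponents_of_mem hdisj hxs).symm⟩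
    · rw [switchComponents_of_forall_notMem (not_exists.mp hxR)]
      exact .inl ⟨hx, hxR⟩
  · rintro (⟨hz, hzR⟩ | ⟨s, x, hxs, rfl⟩)
    · exact ⟨z, hz, switchComponents_of_forall_notMem (not_exists.mp hzR)⟩
    · exact ⟨x, hRC s hxs, switchComponents_of_mem hdisj hxs⟩

variable [DecidableEq F] {C : Set (Fin n → F)}

theorem three_le_hammingDist_switchComponents_of_mem_of_notMem
    (hC : ∀ x ∈ C, ∀ y ∈ C, x ≠ y → 3 ≤ hammingDist x y) {s : ι}
    (hR : IsIComponent C i (R s)) {x y : Fin n → F} (hx : x ∈ R s) (hy : y ∈ C)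
    (hyR : y ∉ R s) :
    3 ≤ hammingDist (switchComponents i R σ x) (switchComponents i R σ y) :=
  calc 3 ≤ hammingDist (puncture i x) (puncture i y) :=
        hR.three_le_hammingDist_puncture hC hx hy hyR
    _ = hammingDist (puncture i (switchComponents i R σ x))
          (puncture i (switchComponents i R σ y)) := by
        rw [puncture_switchComponents, puncture_switchComponents]
    _ ≤ _ := hammingDist_puncture_le ..

theorem three_le_hammingDist_switchComponents
    (hC : ∀ x ∈ C, ∀ y ∈ C, x ≠ y → 3 ≤ hammingDist x y) (hR : ∀ s, IsIComponent C i (R s))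
    (hdisj : Pairwise (Disjoint on R)) {x y : Fin n → F} (hx : x ∈ C) (hy : y ∈ C)
    (hne : x ≠ y) :
    3 ≤ hammingDist (switchComponents i R σ x) (switchComponents i R σ y) := by
  by_cases hxR : ∃ s, x ∈ R s
  · obtain ⟨s, hxs⟩ := hxR
    by_cases hys : y ∈ R s
    · rw [switchComponents_of_mem hdisj hxs, switchComponents_of_mem hdisj hys,
        hammingDist_applyAt]
      exact hC x hx y hy hne
    · exact three_le_hammingDist_switchComponents_of_mem_of_notMem hC (hR s) hxs hy hys
  · by_cases hyR : ∃ s, y ∈ R s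
    · obtain ⟨s, hys⟩ := hyR
      rw [hammingDist_comm]
      exact three_le_hammingDist_switchComponents_of_mem_of_notMem hC (hR s) hys hx
        fun hxs => hxR ⟨s, hxs⟩
    · rw [switchComponents_of_forall_notMem (not_exists.mp hxR),
        switchComponents_of_forall_notMem (not_exists.mp hyR)]
      exact hC x hx y hy hne

end Switching

theorem switching_i_components_general {n t : ℕ} {F : Type*} [Fintype F] [DecidableEq F]
    (C1 : Set (Fin n → F)) (hC1 : IsOnePerfectCode C1) (i : Fin n)
    (R : Fin t → Set (Fin n → F)) (hR : ∀ s, IsIComponent C1 i (R s))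
    (hdisj : ∀ s s', s ≠ s' → Disjoint (R s) (R s'))
    (σ : Fin t → Equiv.Perm F) :
    IsOnePerfectCode ((C1 \ ⋃ s, R s) ∪ ⋃ s, applyAt i (σ s) '' R s) := by
  rw [← image_switchComponents hdisj fun s => (hR s).subset]
  exact hC1.image fun x hx y hy => three_le_hammingDist_switchComponents hC1.1 hR hdisj hx hy

/-- switching a family of pairwise disjoint `i`-components.
If `R_i(1),…,R_i(t)` are pairwise disjoint `i`-components of a `q`-ary
1-perfect code `C1` of length `n` and `σ_1,…,σ_t` are permutations of `F_q`,
then `(C1 \ ∪_s R_i(s)) ∪ (∪_s σ_s(R_i(s)))` is a `q`-ary 1-perfect code. -/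
theorem switching_i_components {n t : ℕ} {F : Type*} [Field F] [Fintype F] [DecidableEq F]
    (C1 : Set (Fin n → F)) (hC1 : IsOnePerfectCode C1) (i : Fin n)
    (R : Fin t → Set (Fin n → F)) (hR : ∀ s, IsIComponent C1 i (R s))
    (hdisj : ∀ s s', s ≠ s' → Disjoint (R s) (R s'))
    (σ : Fin t → Equiv.Perm F) :
    IsOnePerfectCode ((C1 \ ⋃ s, R s) ∪ ⋃ s, applyAt i (σ s) '' R s) :=
  switching_i_components_general C1 hC1 i R hR hdisj σ
end

section
/- Let H_{q,m} be the q-ary Hamming code of length n = (q^m−1)/(q−1), m ≥ 2, with parity-check matrix H = [h_1,...,h_n]. Fix a coordinate i and let l_1,...,l_{(n−1)/q} be the lines of the projective geometry PG_{m−1}(q) through the point i. Then the subspace R_i spanned by all weight-3 codewords (triples) of H_{q,m} with a 1 in coordinate i satisfies R_i = H_{l_1} + H_{l_2} + ... + H_{l_{(n−1)/q}}, and the dimension of R_i over F_q equals q^{m−1} − 1. -/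
variable {F : Type*} [Field F] [Fintype F] [DecidableEq F] {m n : ℕ}

/-- The linear code with parity-check columns `h`. -/
def parityCheckCode (h : Fin n → Fin m → F) : Submodule F (Fin n → F) where
  carrier := {x | ∑ j, x j • h j = 0}
  add_mem' := by
    intro a b ha hb
    simp only [Set.mem_setOf_eq, Pi.add_apply, add_smul, Finset.sum_add_distrib] at *
    simp [ha, hb]
  zero_mem' := by simp
  smul_mem' := by
    intro c a ha
    simp only [Set.mem_setOf_eq, Pi.smul_apply, smul_eq_mul, mul_smul] at *
    rw [← Finset.smul_sum, ha, smul_zero]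

/-- The submodule of vectors supported inside the coordinate set `l`. -/
def supportedIn (l : Set (Fin n)) : Submodule F (Fin n → F) where
  carrier := {u | ∀ j ∉ l, u j = 0}
  add_mem' := by intro a b ha hb j hj; simp [ha j hj, hb j hj]
  zero_mem' := by intro j hj; simp
  smul_mem' := by intro c a ha j hj; simp [ha j hj]

/-- The principal `i`-component `R_i`: span of all triples (codewords of
weight 3) with a `1` in coordinate `i`. -/
def principalComponent (h : Fin n → Fin m → F) (i : Fin n) : Submodule F (Fin n → F) :=
  Submodule.span F {u | u ∈ parityCheckCode h ∧ hammingNorm u = 3 ∧ u i = 1}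

/-- The line of `PG_{m−1}(q)` through the points `a` and `b`, viewed as a set
of coordinates: `k` is on the line iff `h_k` is in the span of `h_a, h_b`. -/
def lineThrough (h : Fin n → Fin m → F) (a b : Fin n) : Set (Fin n) :=
  {k | h k ∈ Submodule.span F {h a, h b}}

/-!
Every weight-3 codeword through `i` is supported on a line through `i`, so `R_i ≤ ∑ H_l`.
Conversely, fix on each line `l` through `i` an anchor point `a_l`; every other point `y ≠ i` of
`l` carries a codeword `t_y` supported on `{i, a_l, y}` with `t_y y = 1`. For `u ∈ H_l`, the
codeword `u - ∑ u_y • t_y` is supported on `{i, a_l}`, hence zero since the columns are pairwise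
independent; so the `t_y` span every `H_l`, and they lie in `R_i`. They are linearly independent
(`t_y` is the only one not vanishing at `y`), so `dim R_i = (n - 1) - L` with `L` the number of
lines through `i`. Each line has `q + 1` points, so `n - 1 = q L`, and `(q - 1) n + 1 = q ^ m`
turns this into `q ^ (m - 1) - 1`.
-/

namespace HammingCode

open scoped Finset

variable {K : Type*} [Field K] {m n : ℕ}

section Code

variable (h : Fin n → Fin m → K)

theorem parityCheckCode_eq_ker :
    parityCheckCode h = LinearMap.ker (Fintype.linearCombination K h) := by
  ext u
  simp [Fintype.linearCombination_apply, parityCheckCode]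

theorem mem_lineThrough_left (a b : Fin n) : a ∈ lineThrough h a b :=
  Submodule.subset_span (by simp)

theorem mem_lineThrough_right (a b : Fin n) : b ∈ lineThrough h a b :=
  Submodule.subset_span (by simp)

theorem exists_mem_supportedIn_triple {a b c : Fin n} (hc : c ∈ lineThrough h a b)
    (hca : c ≠ a) (hcb : c ≠ b) :
    ∃ u ∈ parityCheckCode h ⊓ supportedIn {a, b, c}, u c = 1 := by
  obtain ⟨α, β, hαβ⟩ := Submodule.mem_span_pair.1 hc
  refine ⟨Pi.single c 1 - Pi.single a α - Pi.single b β, ⟨?_, fun j hj => ?_⟩, ?_⟩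
  · simp [parityCheckCode_eq_ker, Fintype.linearCombination_apply_single, ← hαβ]
  · simp only [Set.mem_insert_iff, Set.mem_singleton_iff, not_or] at hj
    simp [hj.1, hj.2.1, hj.2.2]
  · simp [hca, hcb]

theorem mem_lineThrough_of_mem_supportedIn {u : Fin n → K} {a b c : Fin n}
    (hu : u ∈ parityCheckCode h ⊓ supportedIn {a, b, c}) (hc : u c ≠ 0) :
    c ∈ lineThrough h a b := by
  have hsum : u c • h c + ∑ j ∈ Finset.univ.erase c, u j • h j = 0 :=
    (Finset.add_sum_erase _ _ (Finset.mem_univ c)).trans hu.1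
  refine (Submodule.smul_mem_iff (Submodule.span K {h a, h b}) hc).1 ?_
  rw [eq_neg_of_add_eq_zero_left hsum]
  refine Submodule.neg_mem _ (Submodule.sum_mem _ fun j hj => ?_)
  by_cases hj0 : u j = 0
  · simp [hj0]
  have hjc := Finset.ne_of_mem_erase hj
  obtain rfl | rfl : j = a ∨ j = b := by
    by_contra hne
    exact hj0 (hu.2 j (by simp_all))
  · exact Submodule.smul_mem _ _ (mem_lineThrough_left h j b)
  · exact Submodule.smul_mem _ _ (mem_lineThrough_right h a j)

theorem mem_supportedIn_lineThrough [DecidableEq K] {u : Fin n → K} (hu : u ∈ parityCheckCode h)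
    (hweight : hammingNorm u = 3) {a b : Fin n} (hab : a ≠ b) (ha : u a ≠ 0) (hb : u b ≠ 0) :
    u ∈ supportedIn (lineThrough h a b) := by
  intro c hc
  by_contra hc0
  have hca : c ≠ a := fun e => hc (e ▸ mem_lineThrough_left h a b)
  have hcb : c ≠ b := fun e => hc (e ▸ mem_lineThrough_right h a b)
  have hsupp : ({a, b, c} : Finset (Fin n)) = Finset.univ.filter (fun j => u j ≠ 0) := by
    refine Finset.eq_of_subset_of_card_le (fun j hj => ?_) ?_
    · simp only [Finset.mem_insert, Finset.mem_singleton] at hj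
      rcases hj with rfl | rfl | rfl <;> simpa
    · rw [Finset.card_eq_three.2 ⟨a, b, c, hab, hca.symm, hcb.symm, rfl⟩]
      exact hweight.le
  refine hc (mem_lineThrough_of_mem_supportedIn h ⟨hu, fun j hj => ?_⟩ hc0)
  by_contra hj0
  have : j ∈ ({a, b, c} : Finset (Fin n)) := by rw [hsupp]; simpa using hj0
  exact hj (by simpa using this)

theorem principalComponent_le_iSup [DecidableEq K] (i : Fin n) :
    principalComponent h i ≤
      ⨆ x : {x : Fin n // x ≠ i}, parityCheckCode h ⊓ supportedIn (lineThrough h i x) := by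
  rw [principalComponent, Submodule.span_le]
  rintro u ⟨hu, hweight, hui⟩
  obtain ⟨y, hy, hyi⟩ := Finset.exists_mem_ne (hweight.symm ▸ by norm_num : 1 < hammingNorm u) i
  have hy0 : u y ≠ 0 := (Finset.mem_filter.1 hy).2
  have hline := mem_supportedIn_lineThrough h hu hweight (Ne.symm hyi) (by simp [hui]) hy0
  exact Submodule.mem_iSup_of_mem (⟨y, hyi⟩ : {x : Fin n // x ≠ i}) ⟨hu, hline⟩

end Code

variable {h : Fin n → Fin m → K} (hnz : ∀ j, h j ≠ 0) (hnp : ∀ j k, j ≠ k → ∀ c : K, h j ≠ c • h k)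
  (hcover : ∀ z : Fin m → K, z ≠ 0 → ∃ j, ∃ c : K, z = c • h j)

section Independent

include hnz hnp

theorem linearIndependent_pair {a b : Fin n} (hab : a ≠ b) : LinearIndependent K ![h a, h b] :=
  (LinearIndependent.pair_iff' (hnz a)).2 fun c hc => hnp b a hab.symm c hc.symm

theorem finrank_span_pair {a b : Fin n} (hab : a ≠ b) :
    Module.finrank K (Submodule.span K {h a, h b}) = 2 := by
  have := finrank_span_eq_card (linearIndependent_pair hnz hnp hab)
  rwa [Matrix.range_cons_cons_empty, Fintype.card_fin] at this

theorem lineThrough_eq_of_mem {i x y : Fin n} (hx : x ≠ i) (hy : y ≠ i)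
    (hyx : y ∈ lineThrough h i x) : lineThrough h i y = lineThrough h i x := by
  have hle : Submodule.span K {h i, h y} ≤ Submodule.span K {h i, h x} :=
    Submodule.span_le.2 (Set.insert_subset (Submodule.subset_span (by simp))
      (Set.singleton_subset_iff.2 hyx))
  have hspan := Submodule.eq_of_le_of_finrank_eq hle (by
    rw [finrank_span_pair hnz hnp hy.symm, finrank_span_pair hnz hnp hx.symm])
  simp only [lineThrough, hspan]

theorem eq_zero_of_mem_supportedIn_pair {u : Fin n → K} {a b : Fin n} (hab : a ≠ b)
    (hu : u ∈ parityCheckCode h ⊓ supportedIn {a, b}) : u = 0 := by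
  have hsupp : ∀ j, j ≠ a ∧ j ≠ b → u j = 0 := fun j hj => hu.2 j (by simpa using hj)
  have hsum : u a • h a + u b • h b = 0 := by
    rw [← Fintype.sum_eq_add (f := fun j => u j • h j) a b hab fun j hj => by simp [hsupp j hj]]
    exact hu.1
  obtain ⟨ha, hb⟩ := LinearIndependent.pair_iff.1 (linearIndependent_pair hnz hnp hab) _ _ hsum
  funext j
  by_cases hja : j = a
  · rw [hja, ha, Pi.zero_apply]
  by_cases hjb : j = b
  · rw [hjb, hb, Pi.zero_apply]
  exact hsupp j ⟨hja, hjb⟩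

theorem apply_ne_zero_of_mem_supportedIn_triple {u : Fin n → K} {a b c : Fin n} (hbc : b ≠ c)
    (hu : u ∈ parityCheckCode h ⊓ supportedIn {a, b, c}) (hu0 : u ≠ 0) : u a ≠ 0 := by
  intro hua
  refine hu0 (eq_zero_of_mem_supportedIn_pair hnz hnp hbc ⟨hu.1, fun j hj => ?_⟩)
  by_cases hja : j = a
  · rwa [hja]
  · exact hu.2 j (by simp_all)

theorem mem_principalComponent_of_mem_supportedIn [DecidableEq K] {u : Fin n → K} {i a b : Fin n}
    (hia : i ≠ a) (hib : i ≠ b) (hab : a ≠ b)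
    (hu : u ∈ parityCheckCode h ⊓ supportedIn {i, a, b}) (hu0 : u ≠ 0) :
    u ∈ principalComponent h i := by
  have hui : u i ≠ 0 := apply_ne_zero_of_mem_supportedIn_triple hnz hnp hab hu hu0
  have hua : u a ≠ 0 := by
    rw [Set.insert_comm] at hu
    exact apply_ne_zero_of_mem_supportedIn_triple hnz hnp hib hu hu0
  have hub : u b ≠ 0 := by
    rw [Set.pair_comm, Set.insert_comm] at hu
    exact apply_ne_zero_of_mem_supportedIn_triple hnz hnp hia hu hu0
  have hsupp : Finset.univ.filter (fun j => u j ≠ 0) = {i, a, b} := by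
    ext j
    simp only [Finset.mem_filter, Finset.mem_univ, true_and, Finset.mem_insert,
      Finset.mem_singleton]
    refine ⟨fun hj => by_contra fun hne => hj (hu.2 j (by simpa using hne)), ?_⟩
    rintro (rfl | rfl | rfl) <;> assumption
  have hweight : hammingNorm ((u i)⁻¹ • u) = 3 := by
    rw [hammingNorm_smul (fun _ => IsSMulRegular.of_ne_zero (inv_ne_zero hui))]
    exact (congrArg Finset.card hsupp).trans (Finset.card_eq_three.2 ⟨i, a, b, hia, hib, hab, rfl⟩)
  have hgen : (u i)⁻¹ • u ∈ principalComponent h i :=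
    Submodule.subset_span ⟨Submodule.smul_mem _ _ hu.1, hweight, by simp [hui]⟩
  simpa [smul_smul, hui] using Submodule.smul_mem _ (u i) hgen

end Independent

/-- A chosen point of the line through `i` and `y`; it depends only on that line. -/
noncomputable def anchor (h : Fin n → Fin m → K) (i y : Fin n) : Fin n :=
  haveI : Nonempty (Fin n) := ⟨i⟩
  Function.invFun (lineThrough h i) (lineThrough h i y)

theorem lineThrough_anchor (i y : Fin n) : lineThrough h i (anchor h i y) = lineThrough h i y := by
  have : Nonempty (Fin n) := ⟨i⟩
  exact Function.invFun_eq ⟨y, rfl⟩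

theorem anchor_eq_anchor_iff {i y y' : Fin n} :
    anchor h i y = anchor h i y' ↔ lineThrough h i y = lineThrough h i y' := by
  refine ⟨fun e => ?_, fun e => by simp only [anchor, e]⟩
  rw [← lineThrough_anchor i y, e, lineThrough_anchor]

theorem anchor_anchor (i y : Fin n) : anchor h i (anchor h i y) = anchor h i y :=
  anchor_eq_anchor_iff.2 (lineThrough_anchor i y)

include hnp in
theorem anchor_ne {i y : Fin n} (hy : y ≠ i) : anchor h i y ≠ i := by
  intro e
  have hline := lineThrough_anchor (h := h) i y
  rw [e] at hline
  have hy' : y ∈ lineThrough h i i := hline ▸ mem_lineThrough_right h i y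
  obtain ⟨c, hc⟩ := Submodule.mem_span_singleton.1 (by simpa [lineThrough] using hy')
  exact hnp y i hy c hc.symm

include hnz hnp in
theorem anchor_eq_anchor_iff_mem {i x y : Fin n} (hx : x ≠ i) (hy : y ≠ i) :
    anchor h i y = anchor h i x ↔ y ∈ lineThrough h i x := by
  rw [anchor_eq_anchor_iff]
  exact ⟨fun e => e ▸ mem_lineThrough_right h i y, lineThrough_eq_of_mem hnz hnp hx hy⟩

noncomputable def nonAnchors (h : Fin n → Fin m → K) (i : Fin n) : Finset (Fin n) :=
  {y | y ≠ i ∧ anchor h i y ≠ y}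

def IsAnchoredTriples (h : Fin n → Fin m → K) (i : Fin n) (t : Fin n → Fin n → K) : Prop :=
  ∀ y ∈ nonAnchors h i, t y ∈ parityCheckCode h ⊓ supportedIn {i, anchor h i y, y} ∧ t y y = 1

theorem exists_isAnchoredTriples (h : Fin n → Fin m → K) (i : Fin n) :
    ∃ t, IsAnchoredTriples h i t := by
  have : ∀ y ∈ nonAnchors h i,
      ∃ u ∈ parityCheckCode h ⊓ supportedIn {i, anchor h i y, y}, u y = 1 := by
    intro y hy
    simp only [nonAnchors, Finset.mem_filter, Finset.mem_univ, true_and] at hy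
    refine exists_mem_supportedIn_triple h ?_ hy.1 (Ne.symm hy.2)
    rw [lineThrough_anchor]
    exact mem_lineThrough_right h i y
  choose! t ht using this
  exact ⟨t, ht⟩

namespace IsAnchoredTriples

variable {i : Fin n} {t : Fin n → Fin n → K} (ht : IsAnchoredTriples h i t)
include ht

theorem apply_eq_zero {y j : Fin n} (hy : y ∈ nonAnchors h i) (hj : j ∈ nonAnchors h i)
    (hjy : j ≠ y) : t y j = 0 := by
  simp only [nonAnchors, Finset.mem_filter, Finset.mem_univ, true_and] at hj
  refine (ht y hy).1.2 j ?_
  have hja : j ≠ anchor h i y := fun e => hj.2 (by rw [e, anchor_anchor])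
  simp [hj.1, hja, hjy]

theorem linearIndependent : LinearIndependent K (fun y : nonAnchors h i => t y) := by
  refine LinearIndependent.of_comp
    (LinearMap.funLeft K K (Subtype.val : nonAnchors h i → Fin n)) ?_
  convert Pi.linearIndependent_single_one (nonAnchors h i) K with y
  funext j
  by_cases hjy : j = y
  · simp [hjy, (ht y y.2).2]
  · simp [hjy, ht.apply_eq_zero y.2 j.2 (Subtype.coe_ne_coe.2 hjy)]

include hnz hnp

theorem span_le_principalComponent [DecidableEq K] :
    Submodule.span K (Set.range fun y : nonAnchors h i => t y) ≤ principalComponent h i := by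
  rw [Submodule.span_le]
  rintro _ ⟨⟨y, hy⟩, rfl⟩
  have hy' := hy
  simp only [nonAnchors, Finset.mem_filter, Finset.mem_univ, true_and] at hy'
  refine mem_principalComponent_of_mem_supportedIn hnz hnp (anchor_ne hnp hy'.1).symm
    (Ne.symm hy'.1) hy'.2 (ht y hy).1 fun h0 => ?_
  simpa [h0] using (ht y hy).2

theorem lineCode_le_span {x : Fin n} (hx : x ≠ i) :
    parityCheckCode h ⊓ supportedIn (lineThrough h i x) ≤
      Submodule.span K (Set.range fun y : nonAnchors h i => t y) := by
  rintro u ⟨hu, hux⟩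
  set a := anchor h i x
  let S : Finset (Fin n) := {y ∈ nonAnchors h i | anchor h i y = a}
  have htS : ∀ y ∈ S, ∀ j, j ≠ i → j ≠ a → j ≠ y → t y j = 0 := by
    intro y hy j hji hja hjy
    obtain ⟨hyn, hya⟩ := Finset.mem_filter.1 hy
    exact (ht y hyn).1.2 j (by simp [hji, hya, hja, hjy])
  have hrest : u - ∑ y ∈ S, u y • t y = 0 := by
    refine eq_zero_of_mem_supportedIn_pair hnz hnp (anchor_ne hnp hx).symm
      ⟨sub_mem hu (Submodule.sum_mem _ fun y hy => Submodule.smul_mem _ _ ?_), fun j hj => ?_⟩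
    · exact (ht y (Finset.mem_filter.1 hy).1).1.1
    simp only [Set.mem_insert_iff, Set.mem_singleton_iff, not_or] at hj
    have hjS : j ∈ lineThrough h i x → j ∈ S := fun hjx => by
      have hja : anchor h i j = a := (anchor_eq_anchor_iff_mem hnz hnp hx hj.1).2 hjx
      simpa [S, nonAnchors, hj.1, hja] using Ne.symm hj.2
    rw [Pi.sub_apply, Finset.sum_apply, Finset.sum_eq_single j
      (fun y hy hyj => by simp [htS y hy j hj.1 hj.2 (Ne.symm hyj)])
      (fun hjS' => by simp [hux j (mt hjS hjS')])]
    by_cases hjx : j ∈ lineThrough h i x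
    · simp [(ht j (Finset.mem_filter.1 (hjS hjx)).1).2]
    · simp [hux j hjx]
  rw [sub_eq_zero.1 hrest]
  exact Submodule.sum_mem _ fun y hy => Submodule.smul_mem _ _
    (Submodule.subset_span ⟨⟨y, (Finset.mem_filter.1 hy).1⟩, rfl⟩)

end IsAnchoredTriples

theorem eq_pow_pred_sub_one {q n N B m : ℕ} (hq : 2 ≤ q) (hB : B + N + 1 = n)
    (hN : n = q * N + 1) (hm : (q - 1) * n + 1 = q ^ m) : B = q ^ (m - 1) - 1 := by
  obtain ⟨k, rfl⟩ : ∃ k, q = k + 1 := ⟨q - 1, by omega⟩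
  obtain ⟨m, rfl⟩ : ∃ m', m = m' + 1 := by
    refine ⟨m - 1, (Nat.sub_add_cancel (Nat.pos_of_ne_zero fun hm0 => ?_)).symm⟩
    simp [hm0] at hm
    omega
  simp only [Nat.add_sub_cancel] at hm ⊢
  have hpow : (k + 1) * (k * N + 1) = (k + 1) * (k + 1) ^ m := by
    rw [← pow_succ', ← hm, hN]
    ring
  have := Nat.eq_of_mul_eq_mul_left k.succ_pos hpow
  subst hN
  have : B = k * N := by nlinarith
  omega

section Counting

variable [Fintype K] [DecidableEq K]
include hnz hnp hcover

/-- The nonzero vectors of `W` are the `c • h j` with `c ≠ 0` and `h j ∈ W`, each once. -/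
theorem card_sub_one_mul_ncard_add_one (W : Submodule K (Fin m → K)) :
    (Fintype.card K - 1) * {j | h j ∈ W}.ncard + 1 = Fintype.card K ^ Module.finrank K W := by
  have hinj : Function.Injective fun p : Kˣ × Fin n => (p.1 : K) • h p.2 := by
    rintro ⟨c, j⟩ ⟨c', j'⟩ e
    simp only at e
    obtain rfl : j = j' := by
      by_contra hne
      refine hnp j j' hne ((c⁻¹ : Kˣ) * c' : K) ?_
      rw [mul_smul, ← e, ← mul_smul]
      simp
    simp [Units.ext (smul_left_injective K (hnz j) e)]
  have himage : (fun p : Kˣ × Fin n => (p.1 : K) • h p.2) '' (Set.univ ×ˢ {j | h j ∈ W}) =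
      (W : Set (Fin m → K)) \ {0} := by
    ext z
    constructor
    · rintro ⟨⟨c, j⟩, ⟨-, hj⟩, rfl⟩
      exact ⟨W.smul_mem _ hj, by simp [hnz j]⟩
    · rintro ⟨hz, hz0⟩
      obtain ⟨j, c, rfl⟩ := hcover z hz0
      have hc : c ≠ 0 := by rintro rfl; simp at hz0
      exact ⟨⟨Units.mk0 c hc, j⟩, ⟨trivial, (Submodule.smul_mem_iff W hc).1 hz⟩, rfl⟩
  calc (Fintype.card K - 1) * {j | h j ∈ W}.ncard + 1
      = ((W : Set (Fin m → K)) \ {0}).ncard + 1 := by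
        rw [← himage, Set.ncard_image_of_injective _ hinj, Set.ncard_prod, Set.ncard_univ,
          Nat.card_eq_fintype_card, Fintype.card_units]
    _ = Nat.card W := by
        rw [Set.ncard_sdiff_singleton_add_one W.zero_mem, ← Nat.card_coe_set_eq]; rfl
    _ = Fintype.card K ^ Module.finrank K W := by
        rw [Module.natCard_eq_pow_finrank (K := K), Nat.card_eq_fintype_card]

theorem card_sub_one_mul_add_one : (Fintype.card K - 1) * n + 1 = Fintype.card K ^ m := by
  simpa using card_sub_one_mul_ncard_add_one hnz hnp hcover ⊤

theorem ncard_lineThrough {a b : Fin n} (hab : a ≠ b) :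
    (lineThrough h a b).ncard = Fintype.card K + 1 := by
  have hcount := card_sub_one_mul_ncard_add_one hnz hnp hcover (Submodule.span K {h a, h b})
  rw [finrank_span_pair hnz hnp hab] at hcount
  obtain ⟨k, hk⟩ : ∃ k, Fintype.card K = k + 2 :=
    ⟨_, (Nat.sub_add_cancel Fintype.one_lt_card).symm⟩
  rw [hk] at hcount ⊢
  have : (k + 1) * (lineThrough h a b).ncard = (k + 1) * (k + 3) := by
    change (k + 2 - 1) * (lineThrough h a b).ncard + 1 = _ at hcount
    rw [show k + 2 - 1 = k + 1 by omega] at hcount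
    linarith
  exact Nat.eq_of_mul_eq_mul_left k.succ_pos this

theorem card_filter_anchor_eq {i x : Fin n} (hx : x ≠ i) (hxx : anchor h i x = x) :
    #{y ∈ Finset.univ.erase i | anchor h i y = x} = Fintype.card K := by
  have hset : (({y ∈ Finset.univ.erase i | anchor h i y = x} : Finset (Fin n)) : Set (Fin n)) =
      lineThrough h i x \ {i} := by
    ext y
    simp only [Finset.coe_filter, Finset.mem_erase, Finset.mem_univ, and_true, Set.mem_ofPred_eq,
      Set.mem_sdiff, Set.mem_singleton_iff]
    constructor
    · rintro ⟨hy, hyx⟩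
      exact ⟨(anchor_eq_anchor_iff_mem hnz hnp hx hy).1 (hyx.trans hxx.symm), hy⟩
    · rintro ⟨hyx, hy⟩
      exact ⟨hy, ((anchor_eq_anchor_iff_mem hnz hnp hx hy).2 hyx).trans hxx⟩
  rw [← Set.ncard_coe_finset, hset, Set.ncard_sdiff_singleton_of_mem (mem_lineThrough_left h i x),
    ncard_lineThrough hnz hnp hcover hx.symm, Nat.add_sub_cancel]

theorem card_nonAnchors (i : Fin n) : #(nonAnchors h i) = Fintype.card K ^ (m - 1) - 1 := by
  let A : Finset (Fin n) := {y | y ≠ i ∧ anchor h i y = y}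
  have hP : #(Finset.univ.erase i) + 1 = n := by
    simpa [Finset.card_erase_of_mem] using Nat.sub_add_cancel i.pos
  have hsplit : #(nonAnchors h i) + #A + 1 = n := by
    have hA : A = (Finset.univ.erase i).filter (fun y => anchor h i y = y) := by ext; simp [A]
    have hB : nonAnchors h i = (Finset.univ.erase i).filter (fun y => ¬anchor h i y = y) := by
      ext; simp [nonAnchors]
    rw [hA, hB, add_comm #(Finset.filter _ _), Finset.card_filter_add_card_filter_not, hP]
  have hfiber : #(Finset.univ.erase i) = Fintype.card K * #A := by
    rw [Finset.card_eq_sum_card_fiberwise (f := anchor h i) (t := A) fun y hy => ?_]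
    · rw [Finset.sum_const_nat fun x hx => ?_, mul_comm]
      obtain ⟨hx, hxx⟩ := (Finset.mem_filter.1 hx).2
      exact card_filter_anchor_eq hnz hnp hcover hx hxx
    · have hy : y ≠ i := Finset.ne_of_mem_erase hy
      simp [A, anchor_ne hnp hy, anchor_anchor]
  exact eq_pow_pred_sub_one Fintype.one_lt_card hsplit (hP.symm.trans (by rw [hfiber]))
    (card_sub_one_mul_add_one hnz hnp hcover)

end Counting

end HammingCode

theorem principal_component_eq_sum_of_lines_general
    (h : Fin n → Fin m → F)
    (hnz : ∀ j, h j ≠ 0)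
    (hnp : ∀ j k, j ≠ k → ∀ c : F, h j ≠ c • h k)
    (hcover : ∀ z : Fin m → F, z ≠ 0 → ∃ j, ∃ c : F, z = c • h j)
    (i : Fin n) :
    principalComponent h i =
      (⨆ x : {x : Fin n // x ≠ i},
        parityCheckCode h ⊓ supportedIn (lineThrough h i x)) ∧
    Module.finrank F (principalComponent h i) =
      Fintype.card F ^ (m - 1) - 1 := by
  obtain ⟨t, ht⟩ := HammingCode.exists_isAnchoredTriples h i
  have hle := HammingCode.principalComponent_le_iSup h i
  have hsup : (⨆ x : {x : Fin n // x ≠ i}, parityCheckCode h ⊓ supportedIn (lineThrough h i x)) ≤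
      Submodule.span F (Set.range fun y : HammingCode.nonAnchors h i => t y) :=
    iSup_le fun x => ht.lineCode_le_span hnz hnp x.2
  have hspan := le_antisymm (ht.span_le_principalComponent hnz hnp) (hle.trans hsup)
  refine ⟨le_antisymm hle (hsup.trans hspan.le), ?_⟩
  rw [← hspan, finrank_span_eq_card ht.linearIndependent, Fintype.card_coe,
    HammingCode.card_nonAnchors hnz hnp hcover]

/-- `R_i` equals the sum of the subcodes `H_l` over the pencil of
lines `l` through the point `i`, and `dim R_i = q^{m−1} − 1`.  (The pencil of
lines through `i` is exactly `{l_{ix} : x ≠ i}`.) -/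
theorem principal_component_eq_sum_of_lines
    (h : Fin n → Fin m → F) (hm : 2 ≤ m)
    (hn : n = (Fintype.card F ^ m - 1) / (Fintype.card F - 1))
    (hnz : ∀ j, h j ≠ 0)
    (hnp : ∀ j k, j ≠ k → ∀ c : F, h j ≠ c • h k)
    (hcover : ∀ z : Fin m → F, z ≠ 0 → ∃ j, ∃ c : F, z = c • h j)
    (i : Fin n) :
    principalComponent h i =
      (⨆ x : {x : Fin n // x ≠ i},
        parityCheckCode h ⊓ supportedIn (lineThrough h i x)) ∧
    Module.finrank F (principalComponent h i) =
      Fintype.card F ^ (m - 1) - 1 :=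
  principal_component_eq_sum_of_lines_general h hnz hnp hcover i
end

section
/- Let H_{q,m} be the q-ary Hamming code of length n = (q^m−1)/(q−1), let x ∈ F_q^n be such that supp(x) is an (m−2)-dimensional projective hyperplane in PG_{m−1}(q), let i be a coordinate with i ∉ supp(x), and let R_i be the subspace of H_{q,m} spanned by all weight-3 codewords with a 1 in coordinate i. Then for every u ∈ F_q^n with supp(u) ⊆ supp(x), the coset R_i + u intersects the set {v ∈ F_q^n : supp(v) ⊆ supp(x)} in exactly one vector, namely u; equivalently, R_i ∩ {v : supp(v) ⊆ supp(x)} = {0}. -/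
variable {F : Type*} [Field F] [Fintype F] [DecidableEq F] {m n : ℕ}

/-!
Let `r ∈ R_i` be supported in the hyperplane `φ = 0`, which misses the point `i`, and suppose
`r k₀ ≠ 0`. Compute the syndrome of vectors using only the columns on the line `ℓ` through the
points `i` and `k₀`. A codeword never has exactly one support column outside a given subspace, so
the support of a weight-3 codeword through `i` either lies in `ℓ` or meets `ℓ` only in `i`; either
way its restricted syndrome lies in `span {h i}`, hence so does that of `r`. But `ℓ` meets the
hyperplane only in `k₀`, so the restricted syndrome of `r` is `r k₀ • h k₀`, which is not in
`span {h i}`.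
-/

theorem mem_span_singleton_of_mem_span_pair_of_apply_eq_zero {R V : Type*} [CommRing R]
    [NoZeroDivisors R] [AddCommGroup V] [Module R V] (φ : V →ₗ[R] R) {a b c : V}
    (ha : φ a ≠ 0) (hb : φ b = 0) (hc : c ∈ Submodule.span R {a, b}) (hφc : φ c = 0) :
    c ∈ Submodule.span R {b} := by
  obtain ⟨α, β, rfl⟩ := Submodule.mem_span_pair.mp hc
  have hα : α = 0 := by simpa [hb, ha] using hφc
  simpa [hα] using Submodule.smul_mem _ β (Submodule.mem_span_singleton_self b)

theorem eq_of_mem_span_singleton_of_not_proportional {R V ι : Type*} [Semiring R]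
    [AddCommMonoid V] [Module R V] {v : ι → V} (hnp : ∀ j k, j ≠ k → ∀ c : R, v j ≠ c • v k)
    {j k : ι} (hjk : v j ∈ Submodule.span R {v k}) : j = k := by
  by_contra hne
  obtain ⟨c, hc⟩ := Submodule.mem_span_singleton.mp hjk
  exact hnp j k hne c hc.symm

section ParityCheck

variable {K : Type*} [Field K] {h : Fin n → Fin m → K}

theorem column_mem_of_mem_parityCheckCode {w : Fin n → K} (hw : w ∈ parityCheckCode h)
    (W : Submodule K (Fin m → K)) {b : Fin n} (hb : w b ≠ 0)
    (hW : ∀ k ≠ b, w k ≠ 0 → h k ∈ W) : h b ∈ W := by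
  have hsum : w b • h b = -∑ k ∈ Finset.univ.erase b, w k • h k := by
    rw [eq_neg_iff_add_eq_zero, Finset.add_sum_erase _ (fun k => w k • h k) (Finset.mem_univ b)]
    exact hw
  have hbW : w b • h b ∈ W := by
    rw [hsum]
    refine W.neg_mem (W.sum_mem fun k hk => ?_)
    by_cases hwk : w k = 0
    · simp [hwk]
    · exact W.smul_mem _ (hW k (Finset.ne_of_mem_erase hk) hwk)
  exact (W.smul_mem_iff hb).mp hbW

theorem support_subset_or_inter_eq_singleton_of_hammingNorm_eq_three [DecidableEq K]
    {w : Fin n → K} (hw : w ∈ parityCheckCode h) (hw3 : hammingNorm w = 3) {i : Fin n}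
    (hwi : w i ≠ 0) {W : Submodule K (Fin m → K)} (hiW : h i ∈ W) :
    (∀ k, w k ≠ 0 → h k ∈ W) ∨ (∀ k, w k ≠ 0 → h k ∈ W → k = i) := by
  by_contra! hne
  obtain ⟨⟨a, hwa, haW⟩, ⟨b, hwb, hbW, hbi⟩⟩ := hne
  have hsupp : ({i, b, a} : Finset (Fin n)) = ({k | w k ≠ 0} : Finset (Fin n)) := by
    refine Finset.eq_of_subset_of_card_le (fun k hk => ?_) ?_
    · simp only [Finset.mem_insert, Finset.mem_singleton] at hk
      rcases hk with rfl | rfl | rfl <;> simpa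
    · rw [← hammingNorm, hw3, Finset.card_eq_three.mpr ⟨i, b, a, hbi.symm,
        fun hia => haW (hia ▸ hiW), fun hba => haW (hba ▸ hbW), rfl⟩]
  refine haW (column_mem_of_mem_parityCheckCode hw W hwa fun k hka hwk => ?_)
  have hk : k ∈ ({i, b, a} : Finset (Fin n)) := by simpa [hsupp]
  simp only [Finset.mem_insert, Finset.mem_singleton] at hk
  rcases hk with rfl | rfl | rfl
  exacts [hiW, hbW, absurd rfl hka]

open Classical in
noncomputable def restrictedSyndrome (h : Fin n → Fin m → K) (s : Set (Fin n)) :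
    (Fin n → K) →ₗ[K] Fin m → K :=
  ∑ k with k ∈ s, (LinearMap.proj k).smulRight (h k)

open Classical in
theorem restrictedSyndrome_apply (s : Set (Fin n)) (v : Fin n → K) :
    restrictedSyndrome h s v = ∑ k with k ∈ s, v k • h k := by
  simp [restrictedSyndrome]

theorem restrictedSyndrome_mem_span_of_hammingNorm_eq_three [DecidableEq K] {w : Fin n → K}
    (hw : w ∈ parityCheckCode h) (hw3 : hammingNorm w = 3) {i : Fin n} (hwi : w i ≠ 0)
    {W : Submodule K (Fin m → K)} (hiW : h i ∈ W) :
    restrictedSyndrome h {k | h k ∈ W} w ∈ Submodule.span K {h i} := by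
  classical
  rw [restrictedSyndrome_apply]
  rcases support_subset_or_inter_eq_singleton_of_hammingNorm_eq_three hw hw3 hwi hiW
    with hsub | honce
  · have hfull : ∑ k with k ∈ {k | h k ∈ W}, w k • h k = ∑ k, w k • h k := by
      refine Finset.sum_subset (Finset.subset_univ _) fun k _ hk => ?_
      have hwk : w k = 0 := by
        by_contra hwk
        exact hk (by simpa using hsub k hwk)
      simp [hwk]
    rw [hfull, show ∑ k, w k • h k = 0 from hw]
    exact Submodule.zero_mem _
  · have hsingle : ∑ k with k ∈ {k | h k ∈ W}, w k • h k = w i • h i := by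
      refine Finset.sum_eq_single_of_mem i (by simpa using hiW) fun k hk hki => ?_
      have hwk : w k = 0 := by
        by_contra hwk
        exact hki (honce k hwk (by simpa using hk))
      simp [hwk]
    rw [hsingle]
    exact Submodule.smul_mem _ _ (Submodule.mem_span_singleton_self _)

theorem principalComponent_le_comap_restrictedSyndrome [DecidableEq K] {i : Fin n}
    {W : Submodule K (Fin m → K)} (hiW : h i ∈ W) :
    principalComponent h i ≤
      (Submodule.span K {h i}).comap (restrictedSyndrome h {k | h k ∈ W}) :=
  Submodule.span_le.mpr fun _ ⟨hw, hw3, hwi⟩ =>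
    restrictedSyndrome_mem_span_of_hammingNorm_eq_three hw hw3 (hwi ▸ one_ne_zero) hiW

theorem disjoint_principalComponent_supportedIn [DecidableEq K]
    (hnp : ∀ j k, j ≠ k → ∀ c : K, h j ≠ c • h k) (φ : (Fin m → K) →ₗ[K] K) {i : Fin n}
    (hφi : φ (h i) ≠ 0) :
    Disjoint (principalComponent h i) (supportedIn {j | φ (h j) = 0}) := by
  refine Submodule.disjoint_def.mpr fun r hr hsupp => funext fun k₀ => by_contra fun hk₀ => ?_
  change r k₀ ≠ 0 at hk₀
  have hφ_of_ne : ∀ k, r k ≠ 0 → φ (h k) = 0 := fun k => not_imp_comm.mp (hsupp k)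
  have hline : restrictedSyndrome h (lineThrough h i k₀) r = r k₀ • h k₀ := by
    classical
    rw [restrictedSyndrome_apply]
    refine Finset.sum_eq_single_of_mem k₀
      (Finset.mem_filter.mpr ⟨Finset.mem_univ _, Submodule.subset_span (by simp)⟩)
      fun k hk hkk₀ => ?_
    by_cases hrk : r k = 0
    · simp [hrk]
    · refine absurd (eq_of_mem_span_singleton_of_not_proportional hnp ?_) hkk₀
      exact mem_span_singleton_of_mem_span_pair_of_apply_eq_zero φ hφi (hφ_of_ne k₀ hk₀)
        (Finset.mem_filter.mp hk).2 (hφ_of_ne k hrk)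
  have hmem : restrictedSyndrome h (lineThrough h i k₀) r ∈ Submodule.span K {h i} :=
    principalComponent_le_comap_restrictedSyndrome (W := Submodule.span K {h i, h k₀})
      (Submodule.subset_span (Set.mem_insert _ _)) hr
  rw [hline] at hmem
  have hk₀i : k₀ = i :=
    eq_of_mem_span_singleton_of_not_proportional hnp ((Submodule.smul_mem_iff _ hk₀).mp hmem)
  subst hk₀i
  exact hφi (hφ_of_ne _ hk₀)

end ParityCheck

theorem coset_inter_eq_singleton_of_disjoint {R M : Type*} [Ring R] [AddCommGroup M]
    [Module R M] {p q : Submodule R M} (hpq : Disjoint p q) {u : M} (hu : u ∈ q) :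
    {w | ∃ r ∈ p, w = r + u} ∩ (q : Set M) = {u} := by
  ext w
  simp only [Set.mem_inter_iff, Set.mem_ofPred_eq, SetLike.mem_coe, Set.mem_singleton_iff]
  constructor
  · rintro ⟨⟨r, hr, hwr⟩, hw⟩
    subst hwr
    have hrq : r ∈ q := by simpa using q.sub_mem hw hu
    rw [Submodule.disjoint_def.mp hpq r hr hrq, zero_add]
  · rintro rfl
    exact ⟨⟨0, p.zero_mem, (zero_add _).symm⟩, hu⟩

theorem coset_meets_hyperplane_once_general
    (h : Fin n → Fin m → F)
    (hnp : ∀ j k, j ≠ k → ∀ c : F, h j ≠ c • h k)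
    (x : Fin n → F)
    (φ : (Fin m → F) →ₗ[F] F)
    (hhyp : ∀ j, x j ≠ 0 ↔ φ (h j) = 0)
    (i : Fin n) (hi : x i = 0) :
    (∀ u : Fin n → F, (∀ j, u j ≠ 0 → x j ≠ 0) →
      {w | ∃ r ∈ principalComponent h i, w = r + u} ∩
        {v : Fin n → F | ∀ j, v j ≠ 0 → x j ≠ 0} = {u}) ∧
    (principalComponent h i : Set (Fin n → F)) ∩
      {v : Fin n → F | ∀ j, v j ≠ 0 → x j ≠ 0} = {0} := by
  have hdisj : Disjoint (principalComponent h i) (supportedIn {j | φ (h j) = 0}) :=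
    disjoint_principalComponent_supportedIn hnp φ fun hφi => (hhyp i).mpr hφi hi
  have hsupp :
      {v : Fin n → F | ∀ j, v j ≠ 0 → x j ≠ 0} = supportedIn (F := F) {j | φ (h j) = 0} :=
    Set.ext fun v => forall_congr' fun j => by rw [hhyp]; exact not_imp_comm
  rw [hsupp]
  refine ⟨fun u hu => coset_inter_eq_singleton_of_disjoint hdisj
    (by rw [← SetLike.mem_coe, ← hsupp]; exact hu), ?_⟩
  rw [← Submodule.coe_inf, hdisj.eq_bot, Submodule.bot_coe]

/-- Lemma 1: if `supp(x)` is an `(m−2)`-dimensional projective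
hyperplane of `PG_{m−1}(q)` and `i ∉ supp(x)`, then for every `u` supported in
`supp(x)` the coset `R_i + u` meets `{v : supp(v) ⊆ supp(x)}` exactly in `{u}`;
equivalently `R_i ∩ {v : supp(v) ⊆ supp(x)} = {0}`. -/
theorem coset_meets_hyperplane_once
    (h : Fin n → Fin m → F) (hm : 2 ≤ m)
    (hn : n = (Fintype.card F ^ m - 1) / (Fintype.card F - 1))
    (hnz : ∀ j, h j ≠ 0)
    (hnp : ∀ j k, j ≠ k → ∀ c : F, h j ≠ c • h k)
    (hcover : ∀ z : Fin m → F, z ≠ 0 → ∃ j, ∃ c : F, z = c • h j)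
    (x : Fin n → F)
    (φ : (Fin m → F) →ₗ[F] F) (hφ : φ ≠ 0)
    (hhyp : ∀ j, x j ≠ 0 ↔ φ (h j) = 0)
    (i : Fin n) (hi : x i = 0) :
    (∀ u : Fin n → F, (∀ j, u j ≠ 0 → x j ≠ 0) →
      {w | ∃ r ∈ principalComponent h i, w = r + u} ∩
        {v : Fin n → F | ∀ j, v j ≠ 0 → x j ≠ 0} = {u}) ∧
    (principalComponent h i : Set (Fin n → F)) ∩
      {v : Fin n → F | ∀ j, v j ≠ 0 → x j ≠ 0} = {0} :=
  coset_meets_hyperplane_once_general h hnp x φ hhyp i hi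
end

section
/- Let R_i be the subspace of the q-ary Hamming code H_{q,m} spanned by all weight-3 codewords with a 1 in coordinate i, and suppose u = (u_1,...,u_n) ∈ R_i has a nonzero component u_x with x ≠ i. Then the projective line l_{ix} through points i and x contains a point y, distinct from i and x, such that u_y ≠ 0. -/
/-! Let `s` be the set of points of the line `l_{ix}` and consider the partial syndrome
`v ↦ ∑_{k ∈ s} v_k h_k`. A triple `h_i + α h_a + β h_b = 0` through `i` meets the line either
in all three points or in `i` alone (if `a` lay on it, so would `b`), so its partial syndrome is `0`
or `h_i`: the partial syndrome maps `R_i` into the span of `h_i`. If `u` vanished on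
`l_{ix} ∖ {i, x}`, its partial syndrome would be `u_i h_i + u_x h_x`, making `h_x` a multiple
of `h_i`. -/

variable {F : Type*} [Field F] [Fintype F] [DecidableEq F] {m n : ℕ}

open Finset

section

variable {K : Type*} [Field K]

theorem Submodule.mem_of_add_smul_eq_zero {M : Type*} [AddCommGroup M] [Module K M]
    {V : Submodule K M} {x z : M} {c : K} (hx : x ∈ V) (hc : c ≠ 0) (hxz : x + c • z = 0) :
    z ∈ V := by
  rw [← V.smul_mem_iff hc, eq_neg_of_add_eq_zero_right hxz]
  exact V.neg_mem hx

theorem exists_eq_single_add_single_add_single [DecidableEq K] {w : Fin n → K} {i : Fin n}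
    (hw : hammingNorm w = 3) (hwi : w i = 1) :
    ∃ (a b : Fin n) (α β : K), α ≠ 0 ∧ β ≠ 0 ∧
      w = Pi.single i 1 + Pi.single a α + Pi.single b β := by
  have hi : i ∈ ({k | w k ≠ 0} : Finset (Fin n)) := by simp [hwi]
  obtain ⟨a, b, hab, hsupp⟩ :
      ∃ a b, a ≠ b ∧ ({k | w k ≠ 0} : Finset (Fin n)).erase i = {a, b} := by
    rw [← card_eq_two, card_erase_of_mem hi]
    change hammingNorm w - 1 = 2
    omega
  have hmem : ∀ k, k ≠ i ∧ w k ≠ 0 ↔ k = a ∨ k = b := fun k => by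
    simpa using Finset.ext_iff.1 hsupp k
  obtain ⟨hai, hwa⟩ := (hmem a).2 (Or.inl rfl)
  obtain ⟨hbi, hwb⟩ := (hmem b).2 (Or.inr rfl)
  refine ⟨a, b, w a, w b, hwa, hwb, funext fun k => ?_⟩
  have := hmem k
  simp only [Pi.add_apply, Pi.single_apply]
  split_ifs <;> grind

def partialSyndrome (h : Fin n → Fin m → K) (s : Finset (Fin n)) :
    (Fin n → K) →ₗ[K] Fin m → K where
  toFun v := ∑ k ∈ s, v k • h k
  map_add' v w := by simp only [Pi.add_apply, add_smul, sum_add_distrib]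
  map_smul' c v := by simp only [Pi.smul_apply, smul_eq_mul, mul_smul, smul_sum, RingHom.id_apply]

theorem partialSyndrome_apply (h : Fin n → Fin m → K) (s : Finset (Fin n)) (v : Fin n → K) :
    partialSyndrome h s v = ∑ k ∈ s, v k • h k :=
  rfl

theorem partialSyndrome_single (h : Fin n → Fin m → K) (s : Finset (Fin n)) (k : Fin n)
    (c : K) :
    partialSyndrome h s (Pi.single k c) = if k ∈ s then c • h k else 0 := by
  simp [partialSyndrome_apply, Pi.single_apply, ite_smul]

theorem mem_parityCheckCode_iff (h : Fin n → Fin m → K) (v : Fin n → K) :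
    v ∈ parityCheckCode h ↔ partialSyndrome h univ v = 0 :=
  Iff.rfl

theorem partialSyndrome_triple_mem_span_singleton {h : Fin n → Fin m → K}
    {V : Submodule K (Fin m → K)} {s : Finset (Fin n)} (hs : ∀ k, k ∈ s ↔ h k ∈ V)
    {i : Fin n} (hi : i ∈ s)
    {a b : Fin n} {α β : K} (hα : α ≠ 0) (hβ : β ≠ 0)
    (hw : Pi.single i 1 + Pi.single a α + Pi.single b β ∈ parityCheckCode h) :
    partialSyndrome h s (Pi.single i 1 + Pi.single a α + Pi.single b β) ∈ K ∙ h i := by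
  rw [mem_parityCheckCode_iff] at hw
  simp only [map_add, partialSyndrome_single, mem_univ, if_true, one_smul, hi] at hw ⊢
  have hiV := (hs i).1 hi
  by_cases ha : a ∈ s <;> by_cases hb : b ∈ s <;> simp only [ha, hb, if_true, if_false]
  · simp [hw]
  · exact absurd ((hs b).2 <| Submodule.mem_of_add_smul_eq_zero
      (V.add_mem hiV (V.smul_mem α ((hs a).1 ha))) hβ hw) hb
  · rw [add_right_comm] at hw
    exact absurd ((hs a).2 <| Submodule.mem_of_add_smul_eq_zero
      (V.add_mem hiV (V.smul_mem β ((hs b).1 hb))) hα hw) ha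
  · simp [Submodule.mem_span_singleton_self]

theorem principalComponent_le_comap_partialSyndrome [DecidableEq K] {h : Fin n → Fin m → K}
    {V : Submodule K (Fin m → K)} {s : Finset (Fin n)} (hs : ∀ k, k ∈ s ↔ h k ∈ V)
    {i : Fin n} (hi : i ∈ s) :
    principalComponent h i ≤ (K ∙ h i).comap (partialSyndrome h s) := by
  rw [principalComponent, Submodule.span_le]
  rintro w ⟨hw, hw3, hwi⟩
  obtain ⟨a, b, α, β, hα, hβ, rfl⟩ := exists_eq_single_add_single_add_single hw3 hwi
  exact partialSyndrome_triple_mem_span_singleton hs hi hα hβ hw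

end

theorem line_has_third_nonzero_point_general
    (h : Fin n → Fin m → F)
    (hnp : ∀ j k, j ≠ k → ∀ c : F, h j ≠ c • h k)
    (i x : Fin n) (u : Fin n → F)
    (hu : u ∈ principalComponent h i) (hx : u x ≠ 0) (hxi : x ≠ i) :
    ∃ y ∈ lineThrough h i x, y ≠ i ∧ y ≠ x ∧ u y ≠ 0 := by
  classical
  by_contra! hzero
  set s : Finset (Fin n) := {k | h k ∈ Submodule.span F {h i, h x}}
  have hs : ∀ k, k ∈ s ↔ h k ∈ Submodule.span F {h i, h x} := by simp [s]
  have hi : i ∈ s := (hs i).2 (Submodule.subset_span (by simp))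
  have hxs : x ∈ s := (hs x).2 (Submodule.subset_span (by simp))
  have hsyn : partialSyndrome h s u = u i • h i + u x • h x :=
    sum_eq_add_of_mem i x hi hxs hxi.symm fun k hk hki => by
      rw [hzero k (mem_filter.1 hk).2 hki.1 hki.2, zero_smul]
  obtain ⟨c, hc⟩ :=
    Submodule.mem_span_singleton.1 (principalComponent_le_comap_partialSyndrome hs hi hu)
  apply hnp x i hxi ((u x)⁻¹ * (c - u i))
  rw [mul_smul, sub_smul, hc, hsyn, add_sub_cancel_left, inv_smul_smul₀ hx]

/-- if `u ∈ R_i` has a nonzero component `u_x` with `x ≠ i`,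
then the line `l_{ix}` contains a point `y`, distinct from `i` and `x`,
with `u_y ≠ 0`. -/
theorem line_has_third_nonzero_point
    (h : Fin n → Fin m → F) (hm : 2 ≤ m)
    (hn : n = (Fintype.card F ^ m - 1) / (Fintype.card F - 1))
    (hnz : ∀ j, h j ≠ 0)
    (hnp : ∀ j k, j ≠ k → ∀ c : F, h j ≠ c • h k)
    (hcover : ∀ z : Fin m → F, z ≠ 0 → ∃ j, ∃ c : F, z = c • h j)
    (i x : Fin n) (u : Fin n → F)
    (hu : u ∈ principalComponent h i) (hx : u x ≠ 0) (hxi : x ≠ i) :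
    ∃ y ∈ lineThrough h i x, y ≠ i ∧ y ≠ x ∧ u y ≠ 0 :=
  line_has_third_nonzero_point_general h hnp i x u hu hx hxi
end

section
/- In the switching of i-components of a q-ary Hamming code, the set left after removing m disjoint principal-component cosets still has full Hamming-code rank: if m ≥ 2 and R_1+c_1,...,R_m+c_m are pairwise disjoint cosets with dim R_i = q^{m−1}−1 inside H_{q,m}, then |H_{q,m} \ ∪_i (R_i+c_i)| = q^{n−m} − m·q^{q^{m−1}−1} > (1/q)·q^{n−m}, and consequently the F_q-span of H_{q,m} \ ∪_i (R_i+c_i) equals H_{q,m} (has dimension n − m). -/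
variable {F : Type*} [Field F] [Fintype F] [DecidableEq F] {m n : ℕ}

/-!
Since the parity-check columns of `H_{q,m}` span `F_q^m`, the code has dimension
`N = n - m`. The `m` disjoint cosets each have `q^d` elements, `d = q^{m-1} - 1`, so the
leftover set has `q^N - m q^d` elements. Writing `N = d + k` with `k` the dimension of
`H_{q,m-1}`, the bound `q^N - m q^d > q^{N-1}` reduces to `2m < q^k`, which holds except for
`m = 2` and `(q, m) = (2, 3)`; there `m q^d > q^N`, so `m` disjoint cosets cannot fit in the
code at all. A set of more than `q^{N-1}` vectors cannot lie in a proper subspace.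
-/

open Module
open scoped Function

section Counting

variable {K V : Type*} [Field K] [Fintype K] [AddCommGroup V] [Module K V] [Finite V]

theorem Submodule.ncard_coe (W : Submodule K V) :
    (W : Set V).ncard = Fintype.card K ^ finrank K W := by
  rw [← Nat.card_coe_set_eq, SetLike.coe_sort_coe, natCard_eq_pow_finrank (K := K),
    Nat.card_eq_fintype_card]

theorem Submodule.ncard_addCoset (R : Submodule K V) (c : V) :
    {w | ∃ r ∈ R, w = r + c}.ncard = Fintype.card K ^ finrank K R := by
  have : {w | ∃ r ∈ R, w = r + c} = (· + c) '' (R : Set V) := by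
    ext w
    simp only [Set.mem_ofPred_eq, Set.mem_image, SetLike.mem_coe, eq_comm]
  rw [this, Set.ncard_image_of_injective _ (add_left_injective c), R.ncard_coe]

theorem ncard_iUnion_addCoset {ι : Type*} [Fintype ι] (R : ι → Submodule K V) (c : ι → V)
    {d : ℕ} (hR : ∀ i, finrank K (R i) = d)
    (hdisj : Pairwise (Disjoint on (fun i ↦ {w | ∃ r ∈ R i, w = r + c i}))) :
    (⋃ i, {w | ∃ r ∈ R i, w = r + c i}).ncard = Fintype.card ι * Fintype.card K ^ d := by
  rw [Set.ncard_iUnion_of_finite (fun _ ↦ Set.toFinite _) hdisj,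
    finsum_eq_sum_of_fintype]
  simp [Submodule.ncard_addCoset, hR]

theorem Submodule.span_eq_of_pow_pred_lt_ncard {W : Submodule K V} {s : Set V} (hsW : s ⊆ W)
    (hs : Fintype.card K ^ (finrank K W - 1) < s.ncard) : span K s = W := by
  refine (span_le.mpr hsW).eq_of_not_lt fun hlt ↦ hs.not_ge ?_
  have hrank := finrank_lt_finrank_of_lt hlt
  calc s.ncard ≤ (span K s : Set V).ncard := Set.ncard_le_ncard subset_span
    _ = Fintype.card K ^ finrank K (span K s) := (span K s).ncard_coe
    _ ≤ Fintype.card K ^ (finrank K W - 1) :=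
      Nat.pow_le_pow_right Fintype.card_pos (by omega)

end Counting

section ParityCheck

variable {K : Type*} [Field K] {m n : ℕ}

theorem parityCheckCode_eq_ker (h : Fin n → Fin m → K) :
    parityCheckCode h = LinearMap.ker (Fintype.linearCombination K h) := by
  ext x
  simp [parityCheckCode, Fintype.linearCombination_apply]

theorem finrank_parityCheckCode (h : Fin n → Fin m → K)
    (hcover : ∀ z : Fin m → K, z ≠ 0 → ∃ j, ∃ c : K, z = c • h j) :
    finrank K (parityCheckCode h) = n - m := by
  have hrange : LinearMap.range (Fintype.linearCombination K h) = ⊤ := by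
    refine Submodule.eq_top_iff'.mpr fun z ↦ ?_
    obtain rfl | hz := eq_or_ne z 0
    · exact zero_mem _
    obtain ⟨j, c, rfl⟩ := hcover z hz
    exact Submodule.smul_mem _ c ⟨Pi.single j 1, by simp [Fintype.linearCombination_apply]⟩
  have := LinearMap.finrank_range_add_finrank_ker (Fintype.linearCombination K h)
  rw [hrange, finrank_top, finrank_fin_fun, finrank_fin_fun] at this
  rw [parityCheckCode_eq_ker]
  omega

end ParityCheck

section HammingArithmetic

/-- The dimension `n - m` of `H_{q,m}`, where `n = 1 + q + ⋯ + q^{m-1}`. -/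
def hammingDim (q m : ℕ) : ℕ := ∑ i ∈ Finset.range m, q ^ i - m

variable {q : ℕ}

theorem hammingDim_succ (hq : 1 ≤ q) (m : ℕ) :
    hammingDim q (m + 1) = q ^ m - 1 + hammingDim q m := by
  have hm : m ≤ ∑ i ∈ Finset.range m, q ^ i := by
    simpa using Finset.card_nsmul_le_sum (Finset.range m) (q ^ ·) 1
      fun i _ ↦ Nat.one_le_pow i q hq
  have := Nat.one_le_pow m q hq
  rw [hammingDim, hammingDim, Finset.sum_range_succ]
  omega

theorem two_mul_succ_lt_pow_hammingDim (hq : 2 ≤ q) {j : ℕ} (hj : 2 ≤ j) (hqj : q = 2 → 3 ≤ j) :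
    2 * (j + 1) < q ^ hammingDim q j := by
  have step : ∀ j ≥ 1, 2 * (j + 1) < q ^ hammingDim q j →
      2 * (j + 2) < q ^ hammingDim q (j + 1) := by
    intro j hj ih
    have hpos : q ^ j - 1 ≠ 0 := by
      have := Nat.one_lt_pow (by omega : j ≠ 0) (by omega : 1 < q)
      omega
    calc 2 * (j + 2) < 2 * q ^ hammingDim q j := by omega
      _ ≤ q ^ (q ^ j - 1) * q ^ hammingDim q j :=
        Nat.mul_le_mul_right _ (hq.trans (Nat.le_self_pow hpos q))
      _ = q ^ hammingDim q (j + 1) := by rw [hammingDim_succ (by omega), pow_add]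
  obtain rfl | hq3 := eq_or_lt_of_le hq
  · have hj3 := hqj rfl
    clear hj hqj
    induction j, hj3 using Nat.le_induction with
    | base => decide
    | succ j hj ih => exact step j (by omega) ih
  · clear hqj
    induction j, hj using Nat.le_induction with
    | base =>
      have : hammingDim q 2 = q - 1 := by simp [hammingDim, Finset.sum_range_succ]; omega
      rw [this]
      calc 2 * (2 + 1) < 3 ^ 2 := by norm_num
        _ ≤ q ^ 2 := Nat.pow_le_pow_left hq3 2
        _ ≤ q ^ (q - 1) := Nat.pow_le_pow_right (by omega) (by omega)
    | succ j hj ih => exact step j (by omega) ih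

theorem pow_hammingDim_pred_lt (hq : 2 ≤ q) {m : ℕ} (hm : 2 ≤ m)
    (hfit : m * q ^ (q ^ (m - 1) - 1) ≤ q ^ hammingDim q m) :
    q ^ (hammingDim q m - 1) < q ^ hammingDim q m - m * q ^ (q ^ (m - 1) - 1) := by
  obtain ⟨j, rfl⟩ : ∃ j, m = j + 1 := ⟨m - 1, by omega⟩
  rw [Nat.add_sub_cancel, hammingDim_succ (by omega)] at hfit ⊢
  set d := q ^ j - 1
  set k := hammingDim q j
  rw [pow_add] at hfit
  have hd : 0 < q ^ d := pow_pos (by omega) d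
  have hk : 2 * (j + 1) < q ^ k := by
    have hj : 2 ≤ j := by
      by_contra! hj
      obtain rfl : j = 1 := by omega
      simp only [k, show hammingDim q 1 = 0 by simp [hammingDim], pow_zero] at hfit
      omega
    refine two_mul_succ_lt_pow_hammingDim hq hj fun hq2 ↦ ?_
    by_contra! hj3
    obtain rfl : j = 2 := by omega
    subst hq2
    simp only [k, show hammingDim 2 2 = 1 by decide, pow_one] at hfit
    omega
  have hcosets : 2 * ((j + 1) * q ^ d) < q ^ (d + k) :=
    calc 2 * ((j + 1) * q ^ d) = 2 * (j + 1) * q ^ d := (mul_assoc ..).symm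
      _ < q ^ k * q ^ d := Nat.mul_lt_mul_of_pos_right hk hd
      _ = q ^ (d + k) := by rw [pow_add, mul_comm]
  have hhalf : 2 * q ^ (d + k - 1) ≤ q ^ (d + k) := by
    have hk0 : k ≠ 0 := by
      rintro h0
      rw [h0, pow_zero] at hk
      omega
    obtain ⟨e, he⟩ : ∃ e, d + k = e + 1 := ⟨d + k - 1, by omega⟩
    rw [he, Nat.add_sub_cancel, pow_succ, mul_comm]
    exact Nat.mul_le_mul_left _ hq
  omega

end HammingArithmetic

theorem leftover_set_spans_hamming_general
    (h : Fin n → Fin m → F) (hm : 2 ≤ m)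
    (hn : n = (Fintype.card F ^ m - 1) / (Fintype.card F - 1))
    (hcover : ∀ z : Fin m → F, z ≠ 0 → ∃ j, ∃ c : F, z = c • h j)
    (R : Fin m → Submodule F (Fin n → F))
    (hRsub : ∀ i, R i ≤ parityCheckCode h)
    (hRdim : ∀ i, Module.finrank F (R i) = Fintype.card F ^ (m - 1) - 1)
    (c : Fin m → (Fin n → F)) (hc : ∀ i, c i ∈ parityCheckCode h)
    (hdisj : ∀ i j, i ≠ j →
      Disjoint {w | ∃ r ∈ R i, w = r + c i} {w | ∃ r ∈ R j, w = r + c j})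
    (D : Set (Fin n → F))
    (hD : D = (parityCheckCode h : Set (Fin n → F)) \
        ⋃ i : Fin m, {w | ∃ r ∈ R i, w = r + c i}) :
    Nat.card D =
        Fintype.card F ^ (n - m) -
          m * Fintype.card F ^ (Fintype.card F ^ (m - 1) - 1) ∧
    Fintype.card F ^ (n - m - 1) < Nat.card D ∧
    Submodule.span F D = parityCheckCode h ∧
    Module.finrank F (parityCheckCode h) = n - m := by
  have hq : 2 ≤ Fintype.card F := Fintype.one_lt_card
  have hdim : n - m = hammingDim (Fintype.card F) m := by rw [hn, ← Nat.geomSum_eq hq]; rfl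
  have hH := finrank_parityCheckCode h hcover
  have hcosets_sub : (⋃ i, {w | ∃ r ∈ R i, w = r + c i}) ⊆ (parityCheckCode h : Set _) :=
    Set.iUnion_subset fun i _ ⟨r, hr, hw⟩ ↦ hw ▸ add_mem (hRsub i hr) (hc i)
  have hcosets := ncard_iUnion_addCoset R c hRdim hdisj
  rw [Fintype.card_fin] at hcosets
  have hfit := Set.ncard_le_ncard hcosets_sub
  rw [hcosets, Submodule.ncard_coe, hH] at hfit
  have hcard : Nat.card D = Fintype.card F ^ (n - m) -
      m * Fintype.card F ^ (Fintype.card F ^ (m - 1) - 1) := by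
    rw [Nat.card_coe_set_eq, hD, Set.ncard_sdiff hcosets_sub, hcosets, Submodule.ncard_coe, hH]
  have hlarge : Fintype.card F ^ (n - m - 1) < Nat.card D := by
    rw [hdim] at hfit
    rw [hcard, hdim]
    exact pow_hammingDim_pred_lt hq hm hfit
  refine ⟨hcard, hlarge, Submodule.span_eq_of_pow_pred_lt_ncard (hD ▸ Set.sdiff_subset) ?_, hH⟩
  rwa [hH, ← Nat.card_coe_set_eq]

/-- removing `m` pairwise disjoint principal-component cosets
from `H_{q,m}` leaves a set of cardinality `q^{n−m} − m·q^{q^{m−1}−1}`, which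
is larger than `(1/q)·q^{n−m} = q^{n−m−1}`, and consequently this set still
spans the whole Hamming code (a subspace of dimension `n − m`). -/
theorem leftover_set_spans_hamming
    (h : Fin n → Fin m → F) (hm : 2 ≤ m)
    (hn : n = (Fintype.card F ^ m - 1) / (Fintype.card F - 1))
    (hnz : ∀ j, h j ≠ 0)
    (hnp : ∀ j k, j ≠ k → ∀ c : F, h j ≠ c • h k)
    (hcover : ∀ z : Fin m → F, z ≠ 0 → ∃ j, ∃ c : F, z = c • h j)
    (R : Fin m → Submodule F (Fin n → F))
    (hRsub : ∀ i, R i ≤ parityCheckCode h)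
    (hRdim : ∀ i, Module.finrank F (R i) = Fintype.card F ^ (m - 1) - 1)
    (c : Fin m → (Fin n → F)) (hc : ∀ i, c i ∈ parityCheckCode h)
    (hdisj : ∀ i j, i ≠ j →
      Disjoint {w | ∃ r ∈ R i, w = r + c i} {w | ∃ r ∈ R j, w = r + c j})
    (D : Set (Fin n → F))
    (hD : D = (parityCheckCode h : Set (Fin n → F)) \
        ⋃ i : Fin m, {w | ∃ r ∈ R i, w = r + c i}) :
    Nat.card D =
        Fintype.card F ^ (n - m) -
          m * Fintype.card F ^ (Fintype.card F ^ (m - 1) - 1) ∧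
    Fintype.card F ^ (n - m - 1) < Nat.card D ∧
    Submodule.span F D = parityCheckCode h ∧
    Module.finrank F (parityCheckCode h) = n - m :=
  leftover_set_spans_hamming_general h hm hn hcover R hRsub hRdim c hc hdisj D hD
end
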